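/- arXiv:2305.12383 — 8 statements merged into one kernel-verified Lean document; each statement's English description precedes it below -/
import Mathlib

section
/- Let (R, m) be a Noetherian local ring, I an m-primary ideal generated by a regular sequence f₁, …, f_d with d ≥ 2. Write I^{[l]} = (f₁^l, …, f_d^l). Then for all integers l ≥ 1 and n ≥ 1, the colon ideal I^{[l]} : I^n equals I^{dl−n−d+1} + I^{[l]} (with the convention I^k = R for k ≤ 0). -/
/-!
Monomials in a regular sequence `f₁, …, f_d` behave as in a polynomial ring: `f_i` is a
nonzerodivisor modulo every ideal generated by monomials in the other `f_t`. This is proved by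
induction on the number of variables, passing to `R ⧸ (f_j)`, and on the total degree of the
generators, which are split according to whether `f_j` divides them.

Let `m = dl - n`. If `x ∈ I^[l] : I^n`, then for every exponent vector `c` with `1 ≤ c_t ≤ l`
and `∑ c_t = m`, the monomial `f^(l - c)` has degree `n`, and cancelling it from
`x f^(l - c) ∈ (f_t^l)` gives `x ∈ (f_t^(c_t))`. The intersection of these ideals is
`I^(m - d + 1) + I^[l]`. To see this, induct on `d`: reduce modulo `f_j^τ` for every value `τ`
that `c_j` can take, then glue the resulting memberships together as `τ` increases, using that
`f_j` is regular modulo each of the ideals involved. The reverse inclusion is the pigeonhole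
principle `I^(d(l-1)+1) ⊆ I^[l]`.
-/

open Ideal

universe u

namespace RegularSeq

variable {A : Type*} [CommRing A] {d : ℕ}

section Colon

variable {Q K P : Ideal A} {a b x : A}

lemma isSMulRegular_quotient_iff : IsSMulRegular (A ⧸ Q) a ↔ ∀ x, a * x ∈ Q → x ∈ Q :=
  isSMulRegular_quotient_iff_mem_of_smul_mem Q a

lemma mem_of_isSMulRegular_of_mul_mem (h : IsSMulRegular (A ⧸ Q) a) (hx : a * x ∈ Q) : x ∈ Q :=
  isSMulRegular_quotient_iff.mp h x hx

lemma isSMulRegular_map_mk_iff :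
    IsSMulRegular ((A ⧸ K) ⧸ Q.map (Ideal.Quotient.mk K)) (Ideal.Quotient.mk K a) ↔
      IsSMulRegular (A ⧸ (Q ⊔ K)) a := by
  simp only [isSMulRegular_quotient_iff, Ideal.Quotient.mk_surjective.forall, ← map_mul,
    mem_quotient_iff_mem_sup]

lemma mem_sup_span_pow_of_pow_mul_mem (h : IsSMulRegular (A ⧸ Q) a) {s k : ℕ}
    (hx : a ^ s * x ∈ Q ⊔ span {a ^ (k + s)}) : x ∈ Q ⊔ span {a ^ k} := by
  induction s generalizing x k with
  | zero => simpa using hx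
  | succ s ih =>
    have hax : a * x ∈ Q ⊔ span {a ^ (k + 1)} :=
      ih (by rwa [← mul_assoc, ← pow_succ, add_right_comm])
    obtain ⟨q, hq, _, hr, he⟩ := Submodule.mem_sup.mp hax
    obtain ⟨r, rfl⟩ := mem_span_singleton'.mp hr
    have hxr : x - r * a ^ k ∈ Q := mem_of_isSMulRegular_of_mul_mem h (by
      rw [show a * (x - r * a ^ k) = q by linear_combination -he]; exact hq)
    rw [← sub_add_cancel x (r * a ^ k)]
    exact add_mem (mem_sup_left hxr) (mem_sup_right (mul_mem_left _ _ (mem_span_singleton_self _)))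

lemma isSMulRegular_quotient_sup_span_mul (hPb : IsSMulRegular (A ⧸ (P ⊔ span {b})) a)
    (hb : IsSMulRegular (A ⧸ P) b) (hPK : IsSMulRegular (A ⧸ (P ⊔ K)) a) :
    IsSMulRegular (A ⧸ (P ⊔ span {b} * K)) a := by
  refine isSMulRegular_quotient_iff.mpr fun x hx => ?_
  obtain ⟨y, hy, _, hbw, hxy⟩ := Submodule.mem_sup.mp hx
  obtain ⟨w, hw, rfl⟩ := mem_span_singleton_mul.mp hbw
  have hx' : a * x ∈ P ⊔ span {b} := by
    rw [← hxy]
    exact add_mem (mem_sup_left hy) (mem_sup_right (mul_mem_right _ _ (mem_span_singleton_self _)))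
  obtain ⟨p, hp, _, hbq, rfl⟩ := Submodule.mem_sup.mp (mem_of_isSMulRegular_of_mul_mem hPb hx')
  obtain ⟨q, rfl⟩ := mem_span_singleton'.mp hbq
  have hqw : a * q - w ∈ P := mem_of_isSMulRegular_of_mul_mem hb (by
    rw [show b * (a * q - w) = y - a * p by linear_combination -hxy]
    exact sub_mem hy (mul_mem_left _ _ hp))
  have hq : q ∈ P ⊔ K := mem_of_isSMulRegular_of_mul_mem hPK (by
    rw [← sub_add_cancel (a * q) w]; exact add_mem (mem_sup_left hqw) (mem_sup_right hw))
  obtain ⟨p', hp', k, hk, rfl⟩ := Submodule.mem_sup.mp hq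
  rw [show p + (p' + k) * b = p + b * p' + b * k by ring]
  exact add_mem (add_mem (mem_sup_left hp) (mem_sup_left (mul_mem_left _ _ hp')))
    (mem_sup_right (mul_mem_mul (mem_span_singleton_self b) hk))

lemma mem_of_forall_mem_sup_span_pow {Q : ℕ → Ideal A} {G : Ideal A} {t₁ t₂ : ℕ}
    (h₁₂ : t₁ ≤ t₂) (hQ : Monotone Q) (hreg : ∀ τ, IsSMulRegular (A ⧸ Q τ) a)
    (hQG : Q t₁ ≤ G) (hstep : ∀ τ < t₂, ∀ y ∈ Q (τ + 1), a ^ τ * y ∈ G) (hlast : a ^ t₂ ∈ G)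
    (hx : ∀ τ, t₁ ≤ τ → τ ≤ t₂ → x ∈ Q τ ⊔ span {a ^ τ}) : x ∈ G := by
  have key : ∀ τ, t₁ ≤ τ → τ ≤ t₂ → ∃ y ∈ G ⊓ Q τ, ∃ v, x = y + a ^ τ * v := by
    intro τ h₁τ
    induction τ, h₁τ using Nat.le_induction with
    | base =>
      intro _
      obtain ⟨y, hy, _, hv, rfl⟩ := Submodule.mem_sup.mp (hx t₁ le_rfl h₁₂)
      obtain ⟨v, rfl⟩ := mem_span_singleton'.mp hv
      exact ⟨y, ⟨hQG hy, hy⟩, v, by ring⟩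
    | succ τ h₁τ ih =>
      intro hτ₂
      obtain ⟨y, ⟨hyG, hyQ⟩, v, rfl⟩ := ih (by omega)
      have hv : a ^ τ * v ∈ Q (τ + 1) ⊔ span {a ^ (1 + τ)} := by
        rw [← add_sub_cancel_left y (a ^ τ * v), add_comm 1 τ]
        exact sub_mem (hx (τ + 1) (by omega) hτ₂) (mem_sup_left (hQ τ.le_succ hyQ))
      obtain ⟨q, hq, _, hw, rfl⟩ :=
        Submodule.mem_sup.mp (mem_sup_span_pow_of_pow_mul_mem (hreg _) hv)
      obtain ⟨w, rfl⟩ := mem_span_singleton'.mp hw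
      exact ⟨y + a ^ τ * q, ⟨add_mem hyG (hstep τ (by omega) q hq),
        add_mem (hQ τ.le_succ hyQ) (mul_mem_left _ _ hq)⟩, w, by ring⟩
  obtain ⟨y, ⟨hyG, -⟩, v, rfl⟩ := key t₂ h₁₂ le_rfl
  exact add_mem hyG (mul_mem_right _ _ hlast)

end Colon

def monomial (g : Fin d → A) (b : Fin d → ℕ) : A := ∏ t, g t ^ b t

def monomialIdeal (g : Fin d → A) (B : Finset (Fin d → ℕ)) : Ideal A :=
  span (monomial g '' B)

def purePowIdeal (g : Fin d → A) (S : Finset (Fin d)) (c : Fin d → ℕ) : Ideal A :=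
  span ((fun t => g t ^ c t) '' S)

def exponentsOfDegree (S : Finset (Fin d)) (k : ℕ) : Finset (Fin d → ℕ) :=
  (Finset.Nat.antidiagonalTuple d k).filter fun b => ∀ t ∉ S, b t = 0

def totalDegree (B : Finset (Fin d → ℕ)) : ℕ := ∑ b ∈ B, ∑ t, b t

section Monomial

variable (g : Fin d → A)

@[simp] lemma monomial_zero : monomial g 0 = 1 := by simp [monomial]

lemma monomial_add (b c : Fin d → ℕ) : monomial g (b + c) = monomial g b * monomial g c := by
  simp [monomial, pow_add, Finset.prod_mul_distrib]

@[simp] lemma monomial_single (t : Fin d) (k : ℕ) : monomial g (Pi.single t k) = g t ^ k := by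
  rw [monomial, Finset.prod_eq_single t (fun s _ hs => by simp [Pi.single_eq_of_ne hs])
    (by simp)]
  simp

lemma monomial_eq_pow_mul {b : Fin d → ℕ} {j : Fin d} {k : ℕ} (hk : k ≤ b j) :
    monomial g b = g j ^ k * monomial g (b - Pi.single j k) := by
  have hb : b = Pi.single j k + (b - Pi.single j k) := by
    ext t
    rcases eq_or_ne t j with rfl | ht
    · simp only [Pi.add_apply, Pi.single_eq_same, Pi.sub_apply]; omega
    · simp [Pi.single_eq_of_ne ht]
  conv_lhs => rw [hb]
  rw [monomial_add, monomial_single]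

lemma monomial_mem_span_pow {S : Finset (Fin d)} {b : Fin d → ℕ} (hb : ∀ t ∉ S, b t = 0) :
    monomial g b ∈ span (g '' S) ^ ∑ t, b t := by
  rw [← Finset.prod_pow_eq_pow_sum]
  refine Ideal.prod_mem_prod fun t _ => ?_
  by_cases ht : t ∈ S
  · exact Ideal.pow_mem_pow (subset_span (Set.mem_image_of_mem g ht)) _
  · simp [hb t ht]

variable {g} in
lemma monomial_mem_monomialIdeal {B : Finset (Fin d → ℕ)} {b : Fin d → ℕ} (hb : b ∈ B) :
    monomial g b ∈ monomialIdeal g B :=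
  subset_span ⟨b, hb, rfl⟩

lemma monomialIdeal_union (B C : Finset (Fin d → ℕ)) [DecidableEq (Fin d → ℕ)] :
    monomialIdeal g (B ∪ C) = monomialIdeal g B ⊔ monomialIdeal g C := by
  rw [monomialIdeal, Finset.coe_union, Set.image_union, span_union]; rfl

@[simp] lemma monomialIdeal_empty : monomialIdeal g ∅ = ⊥ := by simp [monomialIdeal]

lemma monomialIdeal_eq_top_of_zero_mem {B : Finset (Fin d → ℕ)} (h : 0 ∈ B) :
    monomialIdeal g B = ⊤ :=
  (eq_top_iff_one _).mpr (by simpa using monomial_mem_monomialIdeal (g := g) h)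

lemma map_monomialIdeal {A' : Type*} [CommRing A'] (φ : A →+* A') (B : Finset (Fin d → ℕ)) :
    (monomialIdeal g B).map φ = monomialIdeal (φ ∘ g) B := by
  simp only [monomialIdeal, map_span, Set.image_image, monomial, map_prod, map_pow]
  rfl

lemma purePowIdeal_eq_monomialIdeal (S : Finset (Fin d)) (c : Fin d → ℕ) :
    purePowIdeal g S c = monomialIdeal g (S.image fun t => Pi.single t (c t)) := by
  simp [purePowIdeal, monomialIdeal, Set.image_image]

lemma map_purePowIdeal {A' : Type*} [CommRing A'] (φ : A →+* A') (S : Finset (Fin d))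
    (c : Fin d → ℕ) : (purePowIdeal g S c).map φ = purePowIdeal (φ ∘ g) S c := by
  simp [purePowIdeal, map_span, Set.image_image]

lemma purePowIdeal_eq_sup_erase {S : Finset (Fin d)} {j : Fin d} (hj : j ∈ S) (c : Fin d → ℕ) :
    purePowIdeal g S c = purePowIdeal g (S.erase j) c ⊔ span {g j ^ c j} := by
  conv_lhs => rw [← Finset.insert_erase hj]
  rw [purePowIdeal, Finset.coe_insert, Set.image_insert_eq, span_insert, sup_comm]; rfl

lemma purePowIdeal_congr {S : Finset (Fin d)} {c c' : Fin d → ℕ} (h : ∀ t ∈ S, c t = c' t) :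
    purePowIdeal g S c = purePowIdeal g S c' := by
  rw [purePowIdeal, purePowIdeal, Set.image_congr fun t ht => by rw [h t ht]]

lemma mem_exponentsOfDegree {S : Finset (Fin d)} {k : ℕ} {b : Fin d → ℕ} :
    b ∈ exponentsOfDegree S k ↔ (∀ t ∉ S, b t = 0) ∧ ∑ t, b t = k := by
  simp [exponentsOfDegree, Finset.Nat.mem_antidiagonalTuple, and_comm]

lemma span_pow_eq_monomialIdeal (S : Finset (Fin d)) (k : ℕ) :
    span (g '' S) ^ k = monomialIdeal g (exponentsOfDegree S k) := by
  refine le_antisymm ?_ (span_le.mpr ?_)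
  · induction k with
    | zero =>
      rw [monomialIdeal_eq_top_of_zero_mem g (by simp [mem_exponentsOfDegree])]
      exact le_top
    | succ k ih =>
      rw [pow_succ]
      refine (mul_mono_left ih).trans ?_
      rw [monomialIdeal, span_mul_span', span_le]
      rintro _ ⟨_, ⟨b, hb, rfl⟩, _, ⟨t, ht, rfl⟩, rfl⟩
      obtain ⟨hbS, hbk⟩ := mem_exponentsOfDegree.mp hb
      change monomial g b * g t ∈ monomialIdeal g _
      rw [← pow_one (g t), ← monomial_single, ← monomial_add]
      refine monomial_mem_monomialIdeal (mem_exponentsOfDegree.mpr ⟨fun s hs => ?_, ?_⟩)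
      · have hst : s ≠ t := fun h => hs (h ▸ ht)
        simp [hbS s hs, Pi.single_eq_of_ne hst]
      · simp [Finset.sum_add_distrib, hbk]
  · rintro _ ⟨b, hb, rfl⟩
    obtain ⟨hbS, rfl⟩ := mem_exponentsOfDegree.mp hb
    exact monomial_mem_span_pow g hbS

lemma span_pow_le_purePowIdeal (S : Finset (Fin d)) (l : ℕ) :
    span (g '' S) ^ (S.card * (l - 1) + 1) ≤ purePowIdeal g S fun _ => l := by
  rw [span_pow_eq_monomialIdeal, monomialIdeal, span_le]
  rintro _ ⟨b, hb, rfl⟩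
  obtain ⟨hbS, hbk⟩ := mem_exponentsOfDegree.mp hb
  obtain ⟨t, ht, hlt⟩ : ∃ t ∈ S, l ≤ b t := by
    by_contra! h
    have : ∑ t ∈ S, b t ≤ ∑ _t ∈ S, (l - 1) := Finset.sum_le_sum fun t ht => by
      have := h t ht; omega
    rw [Finset.sum_subset (Finset.subset_univ S) fun t _ ht => hbS t ht] at this
    simp only [Finset.sum_const, smul_eq_mul] at this
    omega
  rw [monomial_eq_pow_mul g hlt]
  exact mul_mem_right _ _ (subset_span ⟨t, ht, rfl⟩)

end Monomial

section Split

variable [DecidableEq (Fin d → ℕ)] (B : Finset (Fin d → ℕ)) (j : Fin d)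

lemma monomialIdeal_eq_sup_span_mul (g : Fin d → A) :
    monomialIdeal g B = monomialIdeal g (B.filter (· j = 0)) ⊔
      span {g j} * monomialIdeal g ((B.filter (· j ≠ 0)).image (· - Pi.single j 1)) := by
  conv_lhs => rw [← B.filter_union_filter_not_eq (· j = 0), monomialIdeal_union]
  congr 1
  rw [monomialIdeal, monomialIdeal, span_mul_span', Set.singleton_mul, Finset.coe_image,
    Set.image_image, Set.image_image]
  refine congrArg span (Set.image_congr fun b hb => ?_)
  rw [← pow_one (g j)]
  exact monomial_eq_pow_mul g (Nat.one_le_iff_ne_zero.mpr (Finset.mem_filter.mp hb).2)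

lemma totalDegree_filter_union_image_lt {b₀ : Fin d → ℕ} (hb₀ : b₀ ∈ B) (hj : b₀ j ≠ 0) :
    totalDegree (B.filter (· j = 0) ∪ (B.filter (· j ≠ 0)).image (· - Pi.single j 1)) <
      totalDegree B := by
  set B'' := B.filter (· j ≠ 0)
  have hsub : ∀ b ∈ B'', ∑ t, (b - Pi.single j 1 : Fin d → ℕ) t + 1 = ∑ t, b t := by
    intro b hb
    have hbj := (Finset.mem_filter.mp hb).2
    calc ∑ t, (b - Pi.single j 1 : Fin d → ℕ) t + 1
        = ∑ t, ((b - Pi.single j 1 : Fin d → ℕ) t + (Pi.single j 1 : Fin d → ℕ) t) := by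
          simp [Finset.sum_add_distrib]
      _ = ∑ t, b t := Finset.sum_congr rfl fun t _ => by
          rcases eq_or_ne t j with rfl | ht
          · simp only [Pi.sub_apply, Pi.single_eq_same]; omega
          · simp [Pi.single_eq_of_ne ht]
  have himage : totalDegree (B''.image (· - Pi.single j 1)) + B''.card ≤ totalDegree B'' := by
    refine (Nat.add_le_add_right
      (Finset.sum_image_le_of_nonneg fun _ _ => Nat.zero_le _) _).trans ?_
    rw [Finset.card_eq_sum_ones, ← Finset.sum_add_distrib]
    exact (Finset.sum_congr rfl hsub).le
  have hunion : totalDegree (B.filter (· j = 0) ∪ B''.image (· - Pi.single j 1)) +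
      totalDegree (B.filter (· j = 0) ∩ B''.image (· - Pi.single j 1)) =
      totalDegree (B.filter (· j = 0)) + totalDegree (B''.image (· - Pi.single j 1)) :=
    Finset.sum_union_inter
  have hsplit : totalDegree (B.filter (· j = 0)) + totalDegree B'' = totalDegree B :=
    Finset.sum_filter_add_sum_filter_not B (· j = 0) _
  have hcard : 0 < B''.card := Finset.card_pos.mpr ⟨b₀, Finset.mem_filter.mpr ⟨hb₀, hj⟩⟩
  omega

end Split

def IsRegularOn (g : Fin d → A) (S : Finset (Fin d)) : Prop :=
  ∀ i ∈ S, ∀ T ⊆ S.erase i, IsSMulRegular (A ⧸ span (g '' T)) (g i)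

open RingTheory.Sequence in
lemma isRegularOn_univ_of_isRegular {R : Type*} [CommRing R] [IsNoetherianRing R]
    [IsLocalRing R] {f : Fin d → R} (hf : IsRegular R (List.ofFn f)) :
    IsRegularOn f Finset.univ := by
  classical
  intro i _ T hT
  have hiT : i ∉ T := fun h => by simpa using hT h
  set L := T.toList ++ i :: (Finset.univ \ insert i T).toList
  have hL : L.Nodup := by
    rw [List.nodup_append, List.nodup_cons]
    refine ⟨T.nodup_toList, ⟨by simp, Finset.nodup_toList _⟩, ?_⟩
    grind [Finset.mem_toList]
  have hperm : (List.ofFn f).Perm (L.map f) := by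
    rw [List.ofFn_eq_map]
    refine List.Perm.map f ((List.perm_ext_iff_of_nodup (List.nodup_finRange d) hL).mpr fun a => ?_)
    grind [Finset.mem_toList]
  have hreg := (IsLocalRing.isRegular_of_perm hf hperm).toIsWeaklyRegular
  rw [List.map_append, isWeaklyRegular_append_iff, List.map_cons, isWeaklyRegular_cons_iff] at hreg
  have hT' : ofList (T.toList.map f) • (⊤ : Submodule R R) = span (f '' T) := by
    rw [smul_eq_mul, mul_top, ofList]
    congr 1
    ext
    simp
  rw [hT'] at hreg
  exact hreg.2.1

lemma IsRegularOn.quotient_span_singleton {g : Fin d → A} {S : Finset (Fin d)}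
    (hg : IsRegularOn g S) {j : Fin d} (hj : j ∈ S) :
    IsRegularOn (Ideal.Quotient.mk (span {g j}) ∘ g) (S.erase j) := by
  intro i hi T hT
  rw [Function.comp_apply, Set.image_comp, ← map_span, isSMulRegular_map_mk_iff, sup_comm,
    ← span_insert, ← Set.image_insert_eq, ← Finset.coe_insert]
  refine hg i (Finset.mem_of_mem_erase hi) _ (Finset.insert_subset ?_ ?_)
  · exact Finset.mem_erase.mpr ⟨fun h => (Finset.mem_erase.mp hi).1 h.symm, hj⟩
  · exact hT.trans (Finset.erase_subset_erase _ (Finset.erase_subset _ _))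

theorem IsRegularOn.isSMulRegular_monomialIdeal {A : Type u} [CommRing A] {g : Fin d → A}
    {S : Finset (Fin d)} (hg : IsRegularOn g S) {i : Fin d} (hi : i ∈ S)
    {B : Finset (Fin d → ℕ)} (hB : ∀ b ∈ B, ∀ t ∉ S.erase i, b t = 0) :
    IsSMulRegular (A ⧸ monomialIdeal g B) (g i) := by
  classical
  induction S using Finset.strongInduction generalizing A i B with
  | H S ihS =>
  obtain ⟨n, hn⟩ : ∃ n, totalDegree B = n := ⟨_, rfl⟩
  induction n using Nat.strong_induction_on generalizing i B with
  | _ n ihn =>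
  by_cases h0 : 0 ∈ B
  · rw [monomialIdeal_eq_top_of_zero_mem g h0]
    exact isSMulRegular_quotient_iff.mpr fun _ _ => Submodule.mem_top
  obtain rfl | ⟨b₀, hb₀⟩ := B.eq_empty_or_nonempty
  · have h := hg i hi ∅ (Finset.empty_subset _)
    rwa [Finset.coe_empty, Set.image_empty, span_empty, ← monomialIdeal_empty g] at h
  obtain ⟨j, hj⟩ : ∃ j, b₀ j ≠ 0 := by
    by_contra! h
    exact h0 ((funext h : b₀ = 0) ▸ hb₀)
  obtain ⟨hji, hjS⟩ : j ≠ i ∧ j ∈ S := Finset.mem_erase.mp <| by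
    by_contra h
    exact hj (hB b₀ hb₀ j h)
  have hdeg := totalDegree_filter_union_image_lt B j hb₀ hj
  have hB' : ∀ b ∈ B.filter (· j = 0), ∀ t ∉ (S.erase j).erase i, b t = 0 := by
    intro b hb t ht
    obtain ⟨hbB, hbj⟩ := Finset.mem_filter.mp hb
    rcases eq_or_ne t j with rfl | htj
    · exact hbj
    · exact hB b hbB t fun h => ht (Finset.mem_erase.mpr
        ⟨(Finset.mem_erase.mp h).1, Finset.mem_erase.mpr ⟨htj, Finset.mem_of_mem_erase h⟩⟩)
  rw [monomialIdeal_eq_sup_span_mul B j]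
  refine isSMulRegular_quotient_sup_span_mul ?_ ?_ ?_
  · rw [← isSMulRegular_map_mk_iff, map_monomialIdeal]
    exact ihS _ (Finset.erase_ssubset hjS) (hg.quotient_span_singleton hjS)
      (Finset.mem_erase.mpr ⟨hji.symm, hi⟩) hB'
  · refine ihn _ (hn ▸ lt_of_le_of_lt ?_ hdeg) hjS
      (fun b hb t ht => hB' b hb t fun h => ht (Finset.mem_of_mem_erase h)) rfl
    exact Finset.sum_le_sum_of_subset Finset.subset_union_left
  · rw [← monomialIdeal_union]
    refine ihn _ (hn ▸ hdeg) hi ?_ rfl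
    simp only [Finset.mem_union, Finset.mem_filter, Finset.mem_image]
    rintro _ (⟨hb, -⟩ | ⟨b, ⟨hb, -⟩, rfl⟩) t ht
    · exact hB _ hb t ht
    · simp [hB b hb t ht]

section Consequences

variable {g : Fin d → A} {S : Finset (Fin d)}

lemma IsRegularOn.isSMulRegular_purePowIdeal (hg : IsRegularOn g S) {i : Fin d} (hi : i ∈ S)
    {T : Finset (Fin d)} (hT : T ⊆ S.erase i) (c : Fin d → ℕ) :
    IsSMulRegular (A ⧸ purePowIdeal g T c) (g i) := by
  rw [purePowIdeal_eq_monomialIdeal]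
  refine hg.isSMulRegular_monomialIdeal hi ?_
  simp only [Finset.mem_image]
  rintro _ ⟨t, ht, rfl⟩ s hs
  exact Pi.single_eq_of_ne (fun h => hs (by subst h; exact hT ht)) _

lemma IsRegularOn.quotient_span_pow (hg : IsRegularOn g S) {j : Fin d} (hj : j ∈ S) (s : ℕ) :
    IsRegularOn (Ideal.Quotient.mk (span {g j ^ s}) ∘ g) (S.erase j) := by
  intro i hi T hT
  have hjT : j ∉ T := fun h => by simpa using hT h
  have hsup : span (g '' T) ⊔ span {g j ^ s} =
      purePowIdeal g (insert j T) (Function.update 1 j s) := by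
    rw [purePowIdeal_eq_sup_erase _ (Finset.mem_insert_self j T), Finset.erase_insert hjT,
      Function.update_self, purePowIdeal_congr _ fun t ht => Function.update_of_ne
        (fun h => hjT (by subst h; exact ht)) _ _]
    simp [purePowIdeal]
  rw [Function.comp_apply, Set.image_comp, ← map_span, isSMulRegular_map_mk_iff, hsup]
  refine hg.isSMulRegular_purePowIdeal (Finset.mem_of_mem_erase hi) (Finset.insert_subset ?_ ?_) _
  · exact Finset.mem_erase.mpr ⟨fun h => (Finset.mem_erase.mp hi).1 h.symm, hj⟩
  · exact hT.trans (Finset.erase_subset_erase _ (Finset.erase_subset _ _))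

lemma IsRegularOn.mem_purePowIdeal_of_mul_monomial_mem (hg : IsRegularOn g S)
    {c e : Fin d → ℕ} (he : ∀ t ∉ S, e t = 0) {x : A}
    (hx : x * monomial g e ∈ purePowIdeal g S (c + e)) : x ∈ purePowIdeal g S c := by
  suffices key : ∀ U ⊆ S, ∀ (e : Fin d → ℕ) (x : A), (∀ t ∉ U, e t = 0) →
      x * monomial g e ∈ purePowIdeal g S (c + e) → x ∈ purePowIdeal g S c from
    key S subset_rfl e x he hx
  intro U
  induction U using Finset.induction_on with
  | empty =>
    intro _ e x he hx
    have : e = 0 := funext fun t => he t (Finset.notMem_empty t)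
    simpa [this] using hx
  | insert t U _ ih =>
    intro hU e x he hx
    have htS : t ∈ S := hU (Finset.mem_insert_self t U)
    set e' := e - Pi.single t (e t)
    have he' : ∀ s ∉ U, e' s = 0 := fun s hs => by
      rcases eq_or_ne s t with rfl | hst
      · simp [e']
      · simp [e', Pi.single_eq_of_ne hst, he s (by simp [hst, hs])]
    have hce : ∀ s ∈ S.erase t, (c + e) s = (c + e') s := fun s hs => by
      simp [e', Pi.single_eq_of_ne (Finset.mem_erase.mp hs).1]
    rw [monomial_eq_pow_mul g (j := t) le_rfl, purePowIdeal_eq_sup_erase g htS,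
      purePowIdeal_congr g hce, mul_left_comm, Pi.add_apply] at hx
    have hx' := mem_sup_span_pow_of_pow_mul_mem
      (hg.isSMulRegular_purePowIdeal htS subset_rfl (c + e')) hx
    refine ih ((Finset.subset_insert t U).trans hU) e' x he' ?_
    rw [purePowIdeal_eq_sup_erase g htS]
    simpa [e'] using hx'

end Consequences

theorem IsRegularOn.mem_sup_of_forall_mem_purePowIdeal {A : Type u} [CommRing A]
    {g : Fin d → A} {S : Finset (Fin d)} (hg : IsRegularOn g S) {l m : ℕ} (hSm : S.card ≤ m)
    (hml : m ≤ S.card * l) {x : A}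
    (hx : ∀ c : Fin d → ℕ, (∀ t ∈ S, 1 ≤ c t ∧ c t ≤ l) → ∑ t ∈ S, c t = m →
      x ∈ purePowIdeal g S c) :
    x ∈ span (g '' S) ^ (m + 1 - S.card) ⊔ purePowIdeal g S fun _ => l := by
  classical
  induction S using Finset.strongInduction generalizing A m x with
  | H S ih =>
  obtain rfl | ⟨j, hj⟩ := S.eq_empty_or_nonempty
  · have hx0 := hx 0 (by simp) (by simpa [eq_comm] using hml)
    simp only [purePowIdeal, Finset.coe_empty, Set.image_empty, span_empty, mem_bot] at hx0
    simp [hx0]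
  set S' := S.erase j
  have hcard : S'.card + 1 = S.card := Finset.card_erase_add_one hj
  have hl : 1 ≤ l := Nat.pos_of_ne_zero fun h => by simp [h] at hml; omega
  have hSl : S.card * l = S'.card * l + l := by rw [← hcard, add_mul, one_mul]
  have hS'l : S'.card * (l - 1) = S'.card * l - S'.card := Nat.mul_sub_one _ _
  have hS'l' : S'.card ≤ S'.card * l := Nat.le_mul_of_pos_right _ hl
  have hspan : span (g '' S') ≤ span (g '' S) :=
    span_mono (Set.image_mono (Finset.erase_subset j S))
  have hpure : purePowIdeal g S' (fun _ => l) ≤ purePowIdeal g S fun _ => l :=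
    span_mono (Set.image_mono (Finset.erase_subset j S))
  have hgj : g j ∈ span (g '' S) := subset_span (Set.mem_image_of_mem g hj)
  -- `[t₁, t₂]` is the range of `c j` over the admissible `c`.
  refine mem_of_forall_mem_sup_span_pow (a := g j)
    (Q := fun τ => span (g '' S') ^ (m - τ + 1 - S'.card) ⊔ purePowIdeal g S' fun _ => l)
    (t₁ := max 1 (m - S'.card * l)) (t₂ := min l (m + 1 - S.card)) ?_ ?_ ?_ ?_ ?_ ?_ ?_
  · omega
  · exact fun τ τ' h => sup_le_sup_right (Ideal.pow_le_pow_right (by omega)) _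
  · intro τ
    rw [span_pow_eq_monomialIdeal, purePowIdeal_eq_monomialIdeal, ← monomialIdeal_union]
    refine hg.isSMulRegular_monomialIdeal hj fun b hb t ht => ?_
    rcases Finset.mem_union.mp hb with hb | hb
    · exact (mem_exponentsOfDegree.mp hb).1 t ht
    · obtain ⟨s, hs, rfl⟩ := Finset.mem_image.mp hb
      exact Pi.single_eq_of_ne (fun h => ht (by subst h; exact hs)) _
  · refine sup_le ?_ (hpure.trans le_sup_right)
    by_cases h : m ≤ S'.card * l + 1
    · rw [show m - max 1 (m - S'.card * l) + 1 - S'.card = m + 1 - S.card by omega]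
      exact (Ideal.pow_right_mono hspan _).trans le_sup_left
    · rw [show m - max 1 (m - S'.card * l) + 1 - S'.card = S'.card * (l - 1) + 1 by omega]
      exact (span_pow_le_purePowIdeal g S' l).trans (hpure.trans le_sup_right)
  · intro τ hτ y hy
    obtain ⟨y₁, hy₁, y₂, hy₂, rfl⟩ := Submodule.mem_sup.mp hy
    rw [mul_add]
    refine add_mem (mem_sup_left ?_) (mem_sup_right (mul_mem_left _ _ (hpure hy₂)))
    rw [show m + 1 - S.card = τ + (m - (τ + 1) + 1 - S'.card) by omega, pow_add]
    exact mul_mem_mul (pow_mem_pow hgj τ) (Ideal.pow_right_mono hspan _ hy₁)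
  · rcases min_choice l (m + 1 - S.card) with h | h <;> rw [h]
    · exact mem_sup_right (subset_span ⟨j, hj, rfl⟩)
    · exact mem_sup_left (pow_mem_pow hgj _)
  · intro τ h₁ h₂
    have hπ := ih S' (Finset.erase_ssubset hj) (hg.quotient_span_pow hj τ) (m := m - τ)
      (x := Ideal.Quotient.mk (span {g j ^ τ}) x) (by omega) (by omega) ?_
    · rwa [Set.image_comp, ← map_span, ← Ideal.map_pow, ← map_purePowIdeal, ← Ideal.map_sup,
        mem_quotient_iff_mem_sup] at hπ
    intro c hc hsum
    rw [← map_purePowIdeal, mem_quotient_iff_mem_sup]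
    have hcS := hx (Function.update c j τ) (fun t ht => ?_) ?_
    · rwa [purePowIdeal_eq_sup_erase g hj, Function.update_self,
        purePowIdeal_congr g fun t ht => Function.update_of_ne (Finset.mem_erase.mp ht).1 _ _]
        at hcS
    · rcases eq_or_ne t j with rfl | htj
      · simp only [Function.update_self]; omega
      · rw [Function.update_of_ne htj]; exact hc t (Finset.mem_erase.mpr ⟨htj, ht⟩)
    · rw [Finset.sum_update_of_mem hj, Finset.sdiff_singleton_eq_erase, hsum]
      omega

theorem IsRegularOn.colon_pow_eq {g : Fin d → A}
    (hg : IsRegularOn g Finset.univ) {l n : ℕ} (hn : n + d ≤ d * l) :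
    (purePowIdeal g Finset.univ fun _ => l).colon (span (Set.range g) ^ n : Ideal A) =
      span (Set.range g) ^ (d * l - n + 1 - d) ⊔ purePowIdeal g Finset.univ fun _ => l := by
  have hrange : span (Set.range g) = span (g '' ↑(Finset.univ : Finset (Fin d))) := by
    rw [Finset.coe_univ, Set.image_univ]
  have hpig := span_pow_le_purePowIdeal g Finset.univ l
  rw [Finset.card_univ, Fintype.card_fin, ← hrange] at hpig
  have hdl : d * (l - 1) = d * l - d := Nat.mul_sub_one d l
  refine le_antisymm (fun x hx => ?_) (sup_le (fun x hx => ?_) le_colon)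
  · rw [Submodule.mem_colon] at hx
    have key := hg.mem_sup_of_forall_mem_purePowIdeal (l := l) (m := d * l - n) (x := x)
      (by rw [Finset.card_univ, Fintype.card_fin]; omega) (by simp) fun c hc hsum => ?_
    · simpa [← hrange] using key
    refine hg.mem_purePowIdeal_of_mul_monomial_mem (e := fun t => l - c t) (by simp) ?_
    have hce : c + (fun t => l - c t) = fun _ => l := funext fun t => by
      have := hc t (Finset.mem_univ t); simp only [Pi.add_apply]; omega
    rw [hce]
    refine hx _ ?_
    have hsum' : ∑ t, (l - c t) = n := by
      have h : ∑ t, (l - c t + c t) = ∑ _t : Fin d, l :=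
        Finset.sum_congr rfl fun t ht => Nat.sub_add_cancel (hc t ht).2
      rw [Finset.sum_add_distrib, Finset.sum_const, Finset.card_univ, Fintype.card_fin,
        smul_eq_mul] at h
      omega
    rw [hrange, ← hsum']
    exact monomial_mem_span_pow g (by simp)
  · rw [Submodule.mem_colon]
    intro p hp
    refine hpig ?_
    rw [show d * (l - 1) + 1 = (d * l - n + 1 - d) + n by omega, pow_add]
    exact mul_mem_mul hx hp

end RegularSeq

open RegularSeq in
theorem stmt5_general {R : Type*} [CommRing R] [IsNoetherianRing R] [IsLocalRing R]
    {d : ℕ} (f : Fin d → R)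
    (hreg : RingTheory.Sequence.IsRegular R (List.ofFn f))
    (l n : ℕ) (hl : 1 ≤ l) :
    (Ideal.span (Set.range fun i => f i ^ l)).colon (((Ideal.span (Set.range f)) ^ n : Ideal R) : Set R) =
      (if ((d : ℤ) * l - n - d + 1) ≤ 0 then (⊤ : Ideal R)
        else (Ideal.span (Set.range f)) ^ (((d : ℤ) * l - n - d + 1).toNat))
        ⊔ Ideal.span (Set.range fun i => f i ^ l) := by
  have hJ : span (Set.range fun i => f i ^ l) = purePowIdeal f Finset.univ fun _ => l := by
    rw [purePowIdeal, Finset.coe_univ, Set.image_univ]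
  have hdl : ((d * l : ℕ) : ℤ) = d * l := Nat.cast_mul d l
  have hdl' : d * (l - 1) = d * l - d := Nat.mul_sub_one d l
  have hd_le : d ≤ d * l := Nat.le_mul_of_pos_right d hl
  rw [hJ]
  split_ifs with hk
  · rw [top_sup_eq, Submodule.colon_eq_top_iff_subset]
    have hpig := span_pow_le_purePowIdeal f Finset.univ l
    rw [Finset.coe_univ, Set.image_univ, Finset.card_univ, Fintype.card_fin] at hpig
    exact (Ideal.pow_le_pow_right (by omega)).trans hpig
  · rw [(isRegularOn_univ_of_isRegular hreg).colon_pow_eq (by omega)]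
    congr
    omega

/-- Let `(R,m)` be Noetherian local, `I` an `m`-primary ideal generated by a regular
sequence `f₁, …, f_d` with `d ≥ 2`, and `I^{[l]} = (f₁^l, …, f_d^l)`.  Then for all
`l, n ≥ 1`, `I^{[l]} : I^n = I^{dl-n-d+1} + I^{[l]}`, with the convention `I^k = R`
for `k ≤ 0` (expressed here using integer arithmetic and an `if`). -/
theorem stmt5 {R : Type*} [CommRing R] [IsNoetherianRing R] [IsLocalRing R]
    {d : ℕ} (hd : 2 ≤ d) (f : Fin d → R)
    (hreg : RingTheory.Sequence.IsRegular R (List.ofFn f))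
    (hprim : (Ideal.span (Set.range f)).radical = IsLocalRing.maximalIdeal R)
    (l n : ℕ) (hl : 1 ≤ l) (hn : 1 ≤ n) :
    (Ideal.span (Set.range fun i => f i ^ l)).colon (((Ideal.span (Set.range f)) ^ n : Ideal R) : Set R) =
      (if ((d : ℤ) * l - n - d + 1) ≤ 0 then (⊤ : Ideal R)
        else (Ideal.span (Set.range f)) ^ (((d : ℤ) * l - n - d + 1).toNat))
        ⊔ Ideal.span (Set.range fun i => f i ^ l) :=
  stmt5_general f hreg l n hl
end

section
/- Let (R, m) be a Noetherian local ring, I an ideal of R, and r ∈ I \ I^2 an element whose initial form r* in degree 1 of the associated graded ring G(I) = ⊕_{n≥0} I^n/I^{n+1} is a non-zero-divisor on G(I). Then r is a superficial element of I, i.e., there exists c ∈ ℕ such that for all n ≥ c, (I^{n+1} : r) ∩ I^c = I^n. -/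
/-! The hypothesis on `r` says `r * x ∈ I ^ (k + 2)` forces `x ∈ I ^ (k + 1)` for `x ∈ I ^ k`;
climbing `k = 0, 1, …, n - 1` shows `(I ^ (n + 1) : r) = I ^ n` for every `n`, so `c = 0`
already witnesses superficiality. -/

namespace Ideal

variable {R : Type*} [CommRing R] {I : Ideal R} {r : R}

theorem mem_pow_of_mul_mem_pow_succ
    (hnzd : ∀ n : ℕ, ∀ x ∈ I ^ n, r * x ∈ I ^ (n + 2) → x ∈ I ^ (n + 1))
    {n k : ℕ} {x : R} (hx : r * x ∈ I ^ (n + 1)) (hk : k ≤ n) : x ∈ I ^ k := by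
  induction k with
  | zero => simp
  | succ k ih =>
    exact hnzd k x (ih (by omega)) (pow_le_pow_right (by omega) hx)

theorem colon_pow_succ_span_singleton_eq (hrI : r ∈ I)
    (hnzd : ∀ n : ℕ, ∀ x ∈ I ^ n, r * x ∈ I ^ (n + 2) → x ∈ I ^ (n + 1)) (n : ℕ) :
    (I ^ (n + 1)).colon (span {r}) = I ^ n := by
  ext x
  rw [mem_colon_span_singleton]
  constructor
  · intro hx
    exact mem_pow_of_mul_mem_pow_succ hnzd (by rwa [mul_comm] at hx) le_rfl
  · intro hx
    rw [pow_succ]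
    exact mul_mem_mul hx hrI

end Ideal

theorem stmt7_general {R : Type*} [CommRing R]
    (I : Ideal R) (r : R) (hrI : r ∈ I)
    (hnzd : ∀ n : ℕ, ∀ x ∈ I ^ n, r * x ∈ I ^ (n + 2) → x ∈ I ^ (n + 1)) :
    ∃ c : ℕ, ∀ n ≥ c, (I ^ (n + 1)).colon (Ideal.span {r}) ⊓ I ^ c = I ^ n := by
  refine ⟨0, fun n _ => ?_⟩
  rw [pow_zero, Ideal.one_eq_top, inf_top_eq, Ideal.colon_pow_succ_span_singleton_eq hrI hnzd]

/-- Let `(R,m)` be Noetherian local, `I` an ideal and `r ∈ I \ I²` such that the initial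
form of `r` is a non-zero-divisor on the associated graded ring `G(I)` (expressed
element-wise: for every `n` and `x ∈ I^n`, if `r·x ∈ I^{n+2}` then `x ∈ I^{n+1}`).
Then `r` is a superficial element of `I`: there is `c` with
`(I^{n+1} : r) ∩ I^c = I^n` for all `n ≥ c`. -/
theorem stmt7 {R : Type*} [CommRing R] [IsNoetherianRing R] [IsLocalRing R]
    (I : Ideal R) (r : R) (hrI : r ∈ I) (hr2 : r ∉ I ^ 2)
    (hnzd : ∀ n : ℕ, ∀ x ∈ I ^ n, r * x ∈ I ^ (n + 2) → x ∈ I ^ (n + 1)) :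
    ∃ c : ℕ, ∀ n ≥ c, (I ^ (n + 1)).colon (Ideal.span {r}) ⊓ I ^ c = I ^ n :=
  stmt7_general I r hrI hnzd
end

section
/- Let 𝕜 be a field, d ≥ 1, g ∈ (X₁, …, X_d)² ⊆ 𝕜[[X₁, …, X_d]], and f = X₀² + g ∈ S = 𝕜[[X₀, X₁, …, X_d]]. Let R = S/(f) with maximal ideal m, and let x_i denote the image of X_i in R. Then the associated graded ring G(m) is isomorphic to 𝕜[Y₀, …, Y_d]/(Y₀² + g₂(Y₁, …, Y_d)), where g₂ is the degree-2 homogeneous part of g; consequently, for each 1 ≤ i ≤ d, the initial form of x_i is a non-zero-divisor on G(m), so x_i is a superficial element of m. -/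
/-!
Powers of the maximal ideal of `K⟦X⟧` are the ideals `{s | n ≤ order s}`, and those of `m` are
their images. If `X i * u = v + h * f` with `n ≤ order u` and `n + 2 ≤ order v`, comparing
homogeneous components of degree `n + 1` gives `X i * uₙ = hₖ * P`, where `P = X₀² + g₂` is the
initial form of `f`. As `X i` is prime in `K⟦X⟧` and does not divide `P`, it divides
`hₖ = X i * q`; then `X i * (u - q * f) = v + (h - hₖ) * f` has order `≥ n + 2`, so the lift
`u - q * f` of the class of `u` has order `≥ n + 1`. Iterating gives `(m ^ (n + 1) : xᵢ) = m ^ n`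
for every `n`, i.e. superficiality with `c = 0`.
-/

open MvPowerSeries

namespace MvPowerSeries

section CommSemiring

variable {σ R : Type*} [CommSemiring R]

theorem order_X [Nontrivial R] (i : σ) : (X i : MvPowerSeries σ R).order = 1 := by
  rw [X_def, order_monomial_of_ne_zero one_ne_zero, Finsupp.degree_single, Nat.cast_one]

theorem homogeneousComponent_one_X (i : σ) :
    homogeneousComponent 1 (X i : MvPowerSeries σ R) = X i := by
  classical
  ext e
  rw [coeff_homogeneousComponent, coeff_X]
  split_ifs with h1 h2 h2 <;> simp_all

theorem coeff_single_X_pow_add {j : σ} {k : ℕ} {g : MvPowerSeries σ R}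
    (hgj : coeff (Finsupp.single j k) g = 0) :
    coeff (Finsupp.single j k) (X j ^ k + g) = 1 := by
  classical
  rw [map_add, coeff_X_pow, if_pos rfl, hgj, add_zero]

theorem order_X_pow_add [Nontrivial R] {j : σ} {k : ℕ} {g : MvPowerSeries σ R}
    (hg : k ≤ g.order) (hgj : coeff (Finsupp.single j k) g = 0) :
    (X j ^ k + g).order = (k : ℕ∞) := by
  refine le_antisymm ?_ (le_min ?_ hg |>.trans min_order_le_add)
  · simpa using order_le (d := Finsupp.single j k) (by simp [coeff_single_X_pow_add hgj])
  · rw [X_pow_eq, order_monomial_of_ne_zero one_ne_zero, Finsupp.degree_single]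

theorem not_X_dvd_homogeneousComponent_X_pow_add [Nontrivial R] {i j : σ} (hij : i ≠ j) {k : ℕ}
    {g : MvPowerSeries σ R} (hgj : coeff (Finsupp.single j k) g = 0) :
    ¬ X i ∣ homogeneousComponent k (X j ^ k + g) := by
  rw [X_dvd_iff]
  intro h
  have := h (Finsupp.single j k) (Finsupp.single_eq_of_ne hij)
  rw [coeff_homogeneousComponent, Finsupp.degree_single, if_pos rfl,
    coeff_single_X_pow_add hgj] at this
  exact one_ne_zero this

theorem exists_eq_sum_X_mul_of_le_order [Fintype σ] [LinearOrder σ] {s : MvPowerSeries σ R}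
    {n : ℕ} (hs : n + 1 ≤ s.order) :
    ∃ t : σ → MvPowerSeries σ R, s = ∑ i, X i * t i ∧ ∀ i, n ≤ (t i).order := by
  classical
  -- `t i` collects the monomials of `s` whose least variable is `i`, divided by `X i`
  let t : σ → MvPowerSeries σ R := fun i e =>
    if (e + Finsupp.single i 1).support.min = (i : WithTop σ) then
      coeff (e + Finsupp.single i 1) s else 0
  have coeff_t (i : σ) (e : σ →₀ ℕ) : coeff e (t i) =
      if (e + Finsupp.single i 1).support.min = (i : WithTop σ) then
        coeff (e + Finsupp.single i 1) s else 0 := rfl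
  have coeff_X_mul_t (i : σ) (e : σ →₀ ℕ) :
      coeff e (X i * t i) = if e.support.min = (i : WithTop σ) then coeff e s else 0 := by
    rw [X_def, coeff_monomial_mul, one_mul]
    split_ifs with hi hmin hmin'
    · rw [coeff_t, tsub_add_cancel_of_le hi, if_pos hmin]
    · rw [coeff_t, tsub_add_cancel_of_le hi, if_neg hmin]
    · exact absurd (Finsupp.single_le_iff.mpr
        (Nat.one_le_iff_ne_zero.mpr (Finsupp.mem_support_iff.mp (Finset.mem_of_min hmin')))) hi
    · rfl
  refine ⟨t, ?_, fun i => nat_le_order fun e he => ?_⟩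
  · ext e
    simp only [map_sum, coeff_X_mul_t]
    cases hmin : e.support.min with
    | top =>
      rw [Finset.min_eq_top, Finsupp.support_eq_empty] at hmin
      subst hmin
      simpa using one_le_order_iff_constCoeff_eq_zero.mp (le_add_self.trans hs)
    | coe i => simp
  · rw [coeff_t]
    split_ifs
    · exact coeff_of_lt_order (lt_of_lt_of_le (by simpa using he) hs)
    · rfl

end CommSemiring

section Field

variable {σ K : Type*} [Field K]

theorem mem_maximalIdeal_iff_constantCoeff_eq_zero {s : MvPowerSeries σ K} :
    s ∈ IsLocalRing.maximalIdeal (MvPowerSeries σ K) ↔ constantCoeff s = 0 := by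
  rw [IsLocalRing.mem_maximalIdeal, mem_nonunits_iff, isUnit_iff_constantCoeff,
    isUnit_iff_ne_zero, not_not]

theorem le_order_of_mem_maximalIdeal_pow {s : MvPowerSeries σ K} {n : ℕ}
    (hs : s ∈ IsLocalRing.maximalIdeal (MvPowerSeries σ K) ^ n) : n ≤ s.order := by
  induction n generalizing s with
  | zero => simp
  | succ n ih =>
    rw [pow_succ] at hs
    induction hs using Submodule.mul_induction_on' with
    | mem_mul_mem a ha b hb =>
      have hb : 1 ≤ b.order := one_le_order_iff_constCoeff_eq_zero.mpr
        (mem_maximalIdeal_iff_constantCoeff_eq_zero.mp hb)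
      push_cast
      exact (add_le_add (ih ha) hb).trans le_order_mul
    | add a _ b _ ha hb => exact le_min ha hb |>.trans min_order_le_add

theorem mem_maximalIdeal_pow_iff [Finite σ] {s : MvPowerSeries σ K} {n : ℕ} :
    s ∈ IsLocalRing.maximalIdeal (MvPowerSeries σ K) ^ n ↔ n ≤ s.order := by
  refine ⟨le_order_of_mem_maximalIdeal_pow, fun hs => ?_⟩
  have := Fintype.ofFinite σ
  let _ := LinearOrder.lift' _ (Fintype.equivFin σ).injective
  induction n generalizing s with
  | zero => simp
  | succ n ih =>
    obtain ⟨t, rfl, ht⟩ := exists_eq_sum_X_mul_of_le_order (by exact_mod_cast hs)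
    refine Ideal.sum_mem _ fun i _ => ?_
    rw [pow_succ']
    exact Ideal.mul_mem_mul (mem_maximalIdeal_iff_constantCoeff_eq_zero.mpr (constantCoeff_X i))
      (ih (ht i))

end Field

section CommRing

variable {σ R : Type*} [CommRing R]

theorem le_order_sub_homogeneousComponent {p : MvPowerSeries σ R} {k : ℕ} (hp : k ≤ p.order) :
    k + 1 ≤ (p - homogeneousComponent k p).order := by
  refine nat_le_order fun d hd => ?_
  rw [map_sub, coeff_homogeneousComponent]
  split_ifs with hdk
  · exact sub_self _
  · have hdk : d.degree < k := by
      have : d.degree < k + 1 := by exact_mod_cast hd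
      omega
    rw [coeff_of_lt_order (lt_of_lt_of_le (by exact_mod_cast hdk) hp),
      sub_zero]

variable [IsDomain R]

theorem X_prime (i : σ) : Prime (X i : MvPowerSeries σ R) := by
  classical
  have := NoZeroDivisors.to_isDomain (MvPowerSeries {j // j ≠ i} R)
  -- `X i` generates the kernel of setting `X i` to zero
  have hker : Ideal.span {X i} =
      RingHom.ker (killCompl (R := R) (Function.Embedding.subtype (· ≠ i))) := by
    ext p
    simp only [Ideal.mem_span_singleton, X_dvd_iff, RingHom.mem_ker]
    constructor
    · intro h
      ext x
      rw [coeff_killCompl, map_zero]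
      exact h _ (by simp [Finsupp.embDomain_apply])
    · intro h m hm
      obtain ⟨x, rfl⟩ :
          m ∈ Set.range (Finsupp.embDomain (Function.Embedding.subtype (· ≠ i))) := by
        rw [Finsupp.mem_range_embDomain_iff]
        intro j hj
        exact ⟨⟨j, fun hji => (Finsupp.mem_support_iff.mp hj) (hji ▸ hm)⟩, rfl⟩
      rw [← coeff_killCompl, h, map_zero]
  have hX : (X i : MvPowerSeries σ R) ≠ 0 := fun h => by simpa [h] using order_X (R := R) i
  rw [← Ideal.span_singleton_prime hX, hker]
  exact RingHom.ker_isPrime _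

theorem le_order_of_add_le_order_mul {f g : MvPowerSeries σ R} {a n : ℕ} (hf : f.order = a)
    (h : (n : ℕ∞) + a ≤ (g * f).order) : n ≤ g.order := by
  rw [order_mul, hf] at h
  exact (WithTop.add_le_add_iff_right (WithTop.coe_ne_top (a := a))).mp h

theorem exists_le_order_sub_mul_of_X_mul_sub_mem {f u v : MvPowerSeries σ R} {i : σ} {a n : ℕ}
    (hf : f.order = a) (hP : ¬ X i ∣ homogeneousComponent a f)
    (hu : n ≤ u.order) (hv : n + 2 ≤ v.order) (huv : X i * u - v ∈ Ideal.span {f}) :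
    ∃ q, n + 1 ≤ (u - q * f).order := by
  obtain ⟨h, hh⟩ := Ideal.mem_span_singleton'.mp huv
  suffices ∃ q, (n : ℕ∞) + 2 ≤ ((h - X i * q) * f).order by
    obtain ⟨q, hq⟩ := this
    refine ⟨q, le_order_of_add_le_order_mul (order_X i) ?_⟩
    rw [mul_comm, show X i * (u - q * f) = v + (h - X i * q) * f by linear_combination -hh]
    exact le_min (by exact_mod_cast hv) hq |>.trans min_order_le_add
  simp_rw [order_mul _ f, hf]
  rcases Nat.lt_or_ge (n + 1) a with hna | hna
  · exact ⟨0, le_add_self.trans' (by exact_mod_cast hna)⟩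
  obtain ⟨k, hk⟩ := Nat.exists_eq_add_of_le' hna
  have hh_order : k ≤ h.order := by
    refine le_order_of_add_le_order_mul hf ?_
    rw [← Nat.cast_add, ← hk, hh, sub_eq_add_neg, Nat.cast_add, Nat.cast_one]
    refine le_min ?_ ?_ |>.trans min_order_le_add
    · rw [order_mul, order_X, add_comm]
      exact add_le_add_right hu 1
    · rw [order_neg]
      exact le_trans (by gcongr; norm_num) hv
  -- the homogeneous components of degree `n + 1` of `h * f = X i * u - v`
  have hcomp : homogeneousComponent k h * homogeneousComponent a f =
      X i * homogeneousComponent n u := by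
    rw [← homogeneousComponent_mul_of_le_order hh_order hf.ge, ← hk, hh, map_sub,
      homogeneousComponent_of_lt_order_eq_zero (lt_of_lt_of_le (by norm_cast; omega) hv),
      sub_zero, add_comm, homogeneousComponent_mul_of_le_order (order_X i).ge hu,
      homogeneousComponent_one_X]
  obtain ⟨q, hq⟩ := ((X_prime i).dvd_or_dvd ⟨_, hcomp⟩).resolve_right hP
  refine ⟨q, ?_⟩
  rw [← hq]
  calc (n : ℕ∞) + 2 = (k + 1 : ℕ) + a := by norm_cast; omega
    _ ≤ _ := by gcongr; exact_mod_cast le_order_sub_homogeneousComponent hh_order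

end CommRing

end MvPowerSeries

theorem Ideal.pow_succ_colon_span_singleton_eq {A : Type*} [CommRing A] {m : Ideal A}
    {r : A} (hr : r ∈ m) (h : ∀ n, ∀ x ∈ m ^ n, r * x ∈ m ^ (n + 2) → x ∈ m ^ (n + 1)) (n : ℕ) :
    (m ^ (n + 1)).colon (Ideal.span {r}) = m ^ n := by
  refine le_antisymm (fun x hx => ?_) fun x hx => ?_
  · rw [Ideal.mem_colon_span_singleton, mul_comm] at hx
    have : ∀ t ≤ n, x ∈ m ^ t := by
      intro t
      induction t with
      | zero => simp
      | succ t ih =>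
        exact fun ht => h t x (ih (by omega)) (Ideal.pow_le_pow_right (by omega) hx)
    exact this n le_rfl
  · rw [Ideal.mem_colon_span_singleton, pow_succ]
    exact Ideal.mul_mem_mul hx hr

namespace MvPowerSeries

variable {σ K : Type*} [Field K] [Finite σ]

theorem mem_map_maximalIdeal_pow_iff {I : Ideal (MvPowerSeries σ K)} {x : MvPowerSeries σ K ⧸ I}
    {n : ℕ} :
    x ∈ (Ideal.map (Ideal.Quotient.mk I) (IsLocalRing.maximalIdeal (MvPowerSeries σ K))) ^ n ↔
      ∃ u : MvPowerSeries σ K, n ≤ u.order ∧ Ideal.Quotient.mk I u = x := by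
  simp_rw [← Ideal.map_pow, Ideal.mem_map_iff_of_surjective _ Ideal.Quotient.mk_surjective,
    mem_maximalIdeal_pow_iff]

theorem mem_map_maximalIdeal_pow_succ_of_X_mul_mem {f : MvPowerSeries σ K} {i : σ} {a n : ℕ}
    (hf : f.order = a) (hP : ¬ X i ∣ homogeneousComponent a f)
    {x : MvPowerSeries σ K ⧸ Ideal.span {f}}
    (hx : x ∈ (Ideal.map (Ideal.Quotient.mk _) (IsLocalRing.maximalIdeal _)) ^ n)
    (hix : Ideal.Quotient.mk _ (X i) * x ∈
      (Ideal.map (Ideal.Quotient.mk _) (IsLocalRing.maximalIdeal _)) ^ (n + 2)) :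
    x ∈ (Ideal.map (Ideal.Quotient.mk _) (IsLocalRing.maximalIdeal _)) ^ (n + 1) := by
  obtain ⟨u, hu, rfl⟩ := mem_map_maximalIdeal_pow_iff.mp hx
  obtain ⟨v, hv, hvu⟩ := mem_map_maximalIdeal_pow_iff.mp hix
  obtain ⟨q, hq⟩ := exists_le_order_sub_mul_of_X_mul_sub_mem hf hP hu (by exact_mod_cast hv)
    (Ideal.Quotient.eq.mp (by rw [map_mul, hvu]))
  refine mem_map_maximalIdeal_pow_iff.mpr ⟨u - q * f, by exact_mod_cast hq, ?_⟩
  rw [map_sub, map_mul, Ideal.Quotient.mk_singleton_self, mul_zero, sub_zero]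

end MvPowerSeries

theorem stmt8_general {𝕜 : Type*} [Field 𝕜] (d : ℕ)
    (g : MvPowerSeries (Fin (d + 1)) 𝕜)
    (hg0 : ∀ mexp : Fin (d + 1) →₀ ℕ, mexp 0 ≠ 0 → MvPowerSeries.coeff mexp g = 0)
    (hg2 : g ∈ (Ideal.span {h : MvPowerSeries (Fin (d + 1)) 𝕜 |
        ∃ i : Fin (d + 1), i ≠ 0 ∧ h = MvPowerSeries.X i}) ^ 2)
    (f : MvPowerSeries (Fin (d + 1)) 𝕜) (hf : f = MvPowerSeries.X 0 ^ 2 + g) :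
    ∀ i : Fin (d + 1), i ≠ 0 →
      (∀ n : ℕ, ∀ x ∈ (Ideal.map (Ideal.Quotient.mk (Ideal.span {f}))
            (IsLocalRing.maximalIdeal (MvPowerSeries (Fin (d + 1)) 𝕜))) ^ n,
          (Ideal.Quotient.mk (Ideal.span {f}) (MvPowerSeries.X i)) * x ∈
            (Ideal.map (Ideal.Quotient.mk (Ideal.span {f}))
              (IsLocalRing.maximalIdeal (MvPowerSeries (Fin (d + 1)) 𝕜))) ^ (n + 2) →
          x ∈ (Ideal.map (Ideal.Quotient.mk (Ideal.span {f}))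
            (IsLocalRing.maximalIdeal (MvPowerSeries (Fin (d + 1)) 𝕜))) ^ (n + 1)) ∧
      (∃ c : ℕ, ∀ n ≥ c,
        ((Ideal.map (Ideal.Quotient.mk (Ideal.span {f}))
            (IsLocalRing.maximalIdeal (MvPowerSeries (Fin (d + 1)) 𝕜))) ^ (n + 1)).colon
            (Ideal.span {Ideal.Quotient.mk (Ideal.span {f}) (MvPowerSeries.X i)}) ⊓
          (Ideal.map (Ideal.Quotient.mk (Ideal.span {f}))
            (IsLocalRing.maximalIdeal (MvPowerSeries (Fin (d + 1)) 𝕜))) ^ c =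
        (Ideal.map (Ideal.Quotient.mk (Ideal.span {f}))
          (IsLocalRing.maximalIdeal (MvPowerSeries (Fin (d + 1)) 𝕜))) ^ n) := by
  intro i hi
  have hg_order : 2 ≤ g.order := by
    refine le_order_of_mem_maximalIdeal_pow (Ideal.pow_right_mono ?_ 2 hg2)
    rw [Ideal.span_le]
    rintro _ ⟨j, -, rfl⟩
    exact mem_maximalIdeal_iff_constantCoeff_eq_zero.mpr (constantCoeff_X j)
  have hg_coeff : coeff (Finsupp.single 0 2) g = 0 := hg0 _ (by simp)
  have hnzd := fun n x => mem_map_maximalIdeal_pow_succ_of_X_mul_mem (n := n) (x := x)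
    (hf ▸ order_X_pow_add hg_order hg_coeff)
    (hf ▸ not_X_dvd_homogeneousComponent_X_pow_add hi hg_coeff)
  refine ⟨hnzd, 0, fun n _ => ?_⟩
  rw [Submodule.pow_zero, Ideal.one_eq_top, inf_top_eq]
  exact Ideal.pow_succ_colon_span_singleton_eq
    (Ideal.mem_map_of_mem _ (mem_maximalIdeal_iff_constantCoeff_eq_zero.mpr (constantCoeff_X i)))
    hnzd n

/-- Let `𝕜` be a field, `d ≥ 1`, `g ∈ (X₁,…,X_d)² ⊆ 𝕜[[X₁,…,X_d]]` (viewed inside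
`S = 𝕜[[X₀,…,X_d]]` as a series not involving `X₀`), `f = X₀² + g` and `R = S/(f)` with
maximal ideal `m` (the image of the maximal ideal of `S`).  Then for each `1 ≤ i ≤ d`
the initial form of `xᵢ` is a non-zero-divisor on `G(m)` (expressed element-wise), and
consequently `xᵢ` is a superficial element of `m`. -/
theorem stmt8 {𝕜 : Type*} [Field 𝕜] (d : ℕ) (hd : 1 ≤ d)
    (g : MvPowerSeries (Fin (d + 1)) 𝕜)
    (hg0 : ∀ mexp : Fin (d + 1) →₀ ℕ, mexp 0 ≠ 0 → MvPowerSeries.coeff mexp g = 0)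
    (hg2 : g ∈ (Ideal.span {h : MvPowerSeries (Fin (d + 1)) 𝕜 |
        ∃ i : Fin (d + 1), i ≠ 0 ∧ h = MvPowerSeries.X i}) ^ 2)
    (f : MvPowerSeries (Fin (d + 1)) 𝕜) (hf : f = MvPowerSeries.X 0 ^ 2 + g) :
    ∀ i : Fin (d + 1), i ≠ 0 →
      (∀ n : ℕ, ∀ x ∈ (Ideal.map (Ideal.Quotient.mk (Ideal.span {f}))
            (IsLocalRing.maximalIdeal (MvPowerSeries (Fin (d + 1)) 𝕜))) ^ n,
          (Ideal.Quotient.mk (Ideal.span {f}) (MvPowerSeries.X i)) * x ∈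
            (Ideal.map (Ideal.Quotient.mk (Ideal.span {f}))
              (IsLocalRing.maximalIdeal (MvPowerSeries (Fin (d + 1)) 𝕜))) ^ (n + 2) →
          x ∈ (Ideal.map (Ideal.Quotient.mk (Ideal.span {f}))
            (IsLocalRing.maximalIdeal (MvPowerSeries (Fin (d + 1)) 𝕜))) ^ (n + 1)) ∧
      (∃ c : ℕ, ∀ n ≥ c,
        ((Ideal.map (Ideal.Quotient.mk (Ideal.span {f}))
            (IsLocalRing.maximalIdeal (MvPowerSeries (Fin (d + 1)) 𝕜))) ^ (n + 1)).colon
            (Ideal.span {Ideal.Quotient.mk (Ideal.span {f}) (MvPowerSeries.X i)}) ⊓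
          (Ideal.map (Ideal.Quotient.mk (Ideal.span {f}))
            (IsLocalRing.maximalIdeal (MvPowerSeries (Fin (d + 1)) 𝕜))) ^ c =
        (Ideal.map (Ideal.Quotient.mk (Ideal.span {f}))
          (IsLocalRing.maximalIdeal (MvPowerSeries (Fin (d + 1)) 𝕜))) ^ n) :=
  stmt8_general d g hg0 hg2 f hf
end

section
/- Let (R, m) be a Noetherian local ring of prime characteristic p, let f₁, …, f_d be a regular sequence generating an m-primary ideal I, and write I^{[l]} = (f₁^l, …, f_d^l). For a fixed n ≥ 1 define, for each l ≥ 1, the ideal J_l = I^{[l]} : (I^{[l]})^{*I^n}, where (I^{[l]})^{*I^n} denotes the I^n-tight closure of I^{[l]}. Then J_{l+1} ⊆ J_l for all l ≥ 1; i.e., the sequence of colon ideals is non-increasing in l. -/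
/-- The complement of the union of the minimal primes of `R`. -/
def ringReg (R : Type*) [CommRing R] : Set R :=
  {c | ∀ P ∈ minimalPrimes R, c ∉ P}

/-- The `q`-th Frobenius power `J^{[q]}` of an ideal. -/
def frobPow {R : Type*} [CommRing R] (J : Ideal R) (q : ℕ) : Ideal R :=
  Ideal.span ((fun x => x ^ q) '' (J : Set R))

/-- The `a`-tight closure of an ideal `J` in a ring of characteristic `p`:
`{ z : ∃ c ∈ R⁰, c·a^q·z^q ⊆ J^{[q]} for all q = p^e ≫ 1 }`. -/
def aTightClosure {R : Type*} [CommRing R] (p : ℕ) (a J : Ideal R) : Set R :=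
  {z | ∃ c ∈ ringReg R, ∃ E : ℕ, ∀ e ≥ E, ∀ y ∈ a ^ (p ^ e),
    c * y * z ^ (p ^ e) ∈ frobPow J (p ^ e)}

/-! With `F = f₁ ⋯ f_d` we have `F · I^{[l]} ⊆ I^{[l+1]}`, hence `F · (I^{[l]})^{*I^n} ⊆
(I^{[l+1]})^{*I^n}` by raising to Frobenius powers. If `r` multiplies `(I^{[l+1]})^{*I^n}` into
`I^{[l+1]}` and `z ∈ (I^{[l]})^{*I^n}`, then `r z F ∈ I^{[l+1]}`, and `r z ∈ I^{[l]}` because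
`I^{[l+1]} : F = I^{[l]}` for a regular sequence.

This colon identity is peeled off one generator at a time: `(x^{l+1}, N) : x = (x^l, N)` as soon
as `x` is a nonzerodivisor modulo `N`. The ideals `N` that occur are generated by powers of the
other `f_i`, and `x` is regular modulo them because, over a Noetherian local ring, a regular
sequence in the maximal ideal stays regular after permuting it and raising its terms to positive
powers. -/

open RingTheory.Sequence IsLocalRing

theorem mem_span_pow_sup_of_mul_mem {R : Type*} [CommRing R] {N : Ideal R} {x r : R} {k : ℕ}
    (hx : ∀ y, x * y ∈ N → y ∈ N) (h : x * r ∈ Ideal.span {x ^ (k + 1)} ⊔ N) :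
    r ∈ Ideal.span {x ^ k} ⊔ N := by
  obtain ⟨_, hu, n, hn, hsum⟩ := Submodule.mem_sup.mp h
  obtain ⟨a, rfl⟩ := Ideal.mem_span_singleton'.mp hu
  have hdiff : r - a * x ^ k ∈ N := hx _ (by convert hn using 1; linear_combination -hsum)
  rw [show r = a * x ^ k + (r - a * x ^ k) by ring]
  exact Submodule.add_mem_sup (Ideal.mul_mem_left _ _ (Ideal.mem_span_singleton_self _)) hdiff

section RegularSequence

variable {R : Type*} [CommRing R] [IsLocalRing R]

theorem isWeaklyRegular_pow_cons {M : Type*} [AddCommGroup M] [Module R M] [IsNoetherian R M]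
    {x : R} {rs : List R} {a : ℕ} (ha : a ≠ 0) (hm : ∀ r ∈ x :: rs, r ∈ maximalIdeal R)
    (h : IsWeaklyRegular M (x :: rs)) : IsWeaklyRegular M (x ^ a :: rs) := by
  have hlast := isWeaklyRegular_of_perm_of_subset_maximalIdeal h
    (List.perm_append_singleton x rs).symm hm
  rw [isWeaklyRegular_append_iff, isWeaklyRegular_singleton_iff] at hlast
  refine isWeaklyRegular_of_perm_of_subset_maximalIdeal (rs := rs ++ [x ^ a]) ?_
    (List.perm_append_singleton _ _) ?_
  · rw [isWeaklyRegular_append_iff, isWeaklyRegular_singleton_iff]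
    exact ⟨hlast.1, hlast.2.pow a⟩
  · intro r hr
    rcases List.mem_append.mp hr with hr | hr
    · exact hm r (List.mem_cons_of_mem x hr)
    · rw [List.mem_singleton.mp hr]
      exact Ideal.pow_mem_of_mem _ (hm x List.mem_cons_self) a (Nat.pos_of_ne_zero ha)

theorem isWeaklyRegular_map_pow_append {M : Type*} [AddCommGroup M] [Module R M]
    [IsNoetherian R M] {a : ℕ} (ha : a ≠ 0) (s : List R) {t : List R}
    (hm : ∀ r ∈ s ++ t, r ∈ maximalIdeal R) (h : IsWeaklyRegular M (s ++ t)) :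
    IsWeaklyRegular M (s.map (· ^ a) ++ t) := by
  induction s generalizing M with
  | nil => simpa using h
  | cons x s ih =>
    have hpow := isWeaklyRegular_pow_cons ha hm h
    rw [isWeaklyRegular_cons_iff] at hpow
    rw [List.map_cons, List.cons_append, isWeaklyRegular_cons_iff]
    exact ⟨hpow.1, ih (fun r hr => hm r (List.mem_cons_of_mem x hr)) hpow.2⟩

theorem mem_of_mul_mem_ofList_map_pow [IsNoetherianRing R] {a b : ℕ} (ha : a ≠ 0) (hb : b ≠ 0)
    {pre u : List R} {x : R} (hm : ∀ r ∈ pre ++ x :: u, r ∈ maximalIdeal R)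
    (h : IsWeaklyRegular R (pre ++ x :: u)) {y : R}
    (hy : x * y ∈ Ideal.ofList (pre.map (· ^ a) ++ u.map (· ^ b))) :
    y ∈ Ideal.ofList (pre.map (· ^ a) ++ u.map (· ^ b)) := by
  have hpow : ∀ r ∈ pre.map (· ^ a), r ∈ maximalIdeal R := by
    simp only [List.mem_map]
    rintro _ ⟨c, hc, rfl⟩
    exact Ideal.pow_mem_of_mem _ (hm c (by simp [hc])) a (Nat.pos_of_ne_zero ha)
  simp only [List.mem_append, List.mem_cons] at hm
  have h1 := isWeaklyRegular_map_pow_append ha pre (by simpa using hm) h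
  have h2 : IsWeaklyRegular R (u ++ (pre.map (· ^ a) ++ [x])) :=
    isWeaklyRegular_of_perm_of_subset_maximalIdeal h1 (List.perm_append_comm.trans
      (by simpa using (List.perm_append_singleton x (u ++ pre.map (· ^ a))).symm))
      (by simp only [List.mem_append, List.mem_cons]; grind)
  have h3 := isWeaklyRegular_map_pow_append hb u
    (by simp only [List.mem_append, List.mem_singleton]; grind) h2
  rw [← List.append_assoc, isWeaklyRegular_append_iff, isWeaklyRegular_singleton_iff,
    isSMulRegular_quotient_iff_mem_of_smul_mem] at h3
  simp only [smul_eq_mul, Ideal.mul_top, Ideal.ofList_append, sup_comm] at h3 ⊢ hy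
  exact h3.2 y hy

-- `pre` holds the generators whose exponent has already been lowered from `l + 1` to `l`.
theorem mem_ofList_map_pow_of_prod_mul_mem [IsNoetherianRing R] {l : ℕ} (hl : l ≠ 0)
    (pre : List R) {t : List R} (hm : ∀ r ∈ pre ++ t, r ∈ maximalIdeal R)
    (h : IsWeaklyRegular R (pre ++ t)) {r : R}
    (hr : t.prod * r ∈ Ideal.ofList (pre.map (· ^ l) ++ t.map (· ^ (l + 1)))) :
    r ∈ Ideal.ofList (pre.map (· ^ l) ++ t.map (· ^ l)) := by
  induction t generalizing pre r with
  | nil => simpa using hr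
  | cons x u ih =>
    have hx (y : R) := mem_of_mul_mem_ofList_map_pow hl l.succ_ne_zero hm h (y := y)
    have hxr : x * (u.prod * r) ∈ Ideal.span {x ^ (l + 1)} ⊔
        Ideal.ofList (pre.map (· ^ l) ++ u.map (· ^ (l + 1))) := by
      rw [← mul_assoc]
      simpa only [List.prod_cons, List.map_cons, Ideal.ofList_append, Ideal.ofList_cons,
        sup_left_comm] using hr
    have hu := ih (pre ++ [x]) (by simpa using hm) (by simpa using h)
      (by simpa only [List.map_append, List.map_cons, List.map_nil, Ideal.ofList_append,
        Ideal.ofList_singleton, sup_left_comm, sup_comm, sup_assoc] using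
        mem_span_pow_sup_of_mul_mem hx hxr)
    simpa only [List.map_append, List.map_cons, List.map_nil, Ideal.ofList_append,
      Ideal.ofList_cons, Ideal.ofList_singleton, Ideal.ofList_nil, bot_sup_eq, sup_left_comm,
      sup_comm, sup_assoc] using hu

end RegularSequence

theorem ofList_map_pow_ofFn {R : Type*} [CommRing R] {d : ℕ} (f : Fin d → R) (k : ℕ) :
    Ideal.ofList ((List.ofFn f).map (· ^ k)) = Ideal.span (Set.range fun i => f i ^ k) := by
  unfold Ideal.ofList
  congr 1
  ext
  simp [List.mem_ofFn]

theorem span_pow_le_colon_prod {R : Type*} [CommRing R] {d : ℕ} (f : Fin d → R) (l : ℕ) :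
    Ideal.span (Set.range fun i => f i ^ l) ≤
      (Ideal.span (Set.range fun i => f i ^ (l + 1))).colon {∏ i, f i} := by
  refine Ideal.span_le.mpr ?_
  rintro _ ⟨i, rfl⟩
  rw [SetLike.mem_coe, Submodule.mem_colon_singleton, smul_eq_mul,
    ← Finset.mul_prod_erase _ _ (Finset.mem_univ i), ← mul_assoc, ← pow_succ]
  exact Ideal.mul_mem_right _ _ (Ideal.subset_span ⟨i, rfl⟩)

theorem colon_span_pow_succ_prod {R : Type*} [CommRing R] [IsNoetherianRing R] [IsLocalRing R]
    {d : ℕ} (f : Fin d → R) (hreg : IsWeaklyRegular R (List.ofFn f))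
    (hm : ∀ i, f i ∈ maximalIdeal R) {l : ℕ} (hl : l ≠ 0) :
    (Ideal.span (Set.range fun i => f i ^ (l + 1))).colon {∏ i, f i} =
      Ideal.span (Set.range fun i => f i ^ l) := by
  refine le_antisymm (fun r hr => ?_) (span_pow_le_colon_prod f l)
  rw [Submodule.mem_colon_singleton, smul_eq_mul, ← ofList_map_pow_ofFn, ← List.prod_ofFn,
    mul_comm] at hr
  rw [← ofList_map_pow_ofFn]
  refine mem_ofList_map_pow_of_prod_mul_mem hl [] (fun r hr => ?_) hreg hr
  obtain ⟨i, rfl⟩ := List.mem_ofFn.mp hr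
  exact hm i

theorem frobPow_le_colon {R : Type*} [CommRing R] {J J' : Ideal R} {F : R}
    (h : J ≤ J'.colon {F}) (q : ℕ) : frobPow J q ≤ (frobPow J' q).colon {F ^ q} := by
  refine Ideal.span_le.mpr ?_
  rintro _ ⟨b, hb, rfl⟩
  have hbF := Submodule.mem_colon_singleton.mp (h hb)
  rw [SetLike.mem_coe, Submodule.mem_colon_singleton, smul_eq_mul, ← mul_pow]
  exact Ideal.subset_span ⟨_, hbF, rfl⟩

theorem mul_mem_aTightClosure {R : Type*} [CommRing R] {p : ℕ} {a J J' : Ideal R} {F z : R}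
    (h : J ≤ J'.colon {F}) (hz : z ∈ aTightClosure p a J) : F * z ∈ aTightClosure p a J' := by
  obtain ⟨c, hc, E, hE⟩ := hz
  refine ⟨c, hc, E, fun e he y hy => ?_⟩
  have hmem := Submodule.mem_colon_singleton.mp (frobPow_le_colon h _ (hE e he y hy))
  rw [smul_eq_mul] at hmem
  convert hmem using 1
  ring

theorem stmt10_general {R : Type*} [CommRing R] [IsNoetherianRing R] [IsLocalRing R]
    (p : ℕ) {d : ℕ} (f : Fin d → R)
    (hreg : RingTheory.Sequence.IsRegular R (List.ofFn f))
    (hprim : (Ideal.span (Set.range f)).radical = IsLocalRing.maximalIdeal R)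
    (n : ℕ) (l : ℕ) (hl : 1 ≤ l) :
    {r : R | ∀ z ∈ aTightClosure p ((Ideal.span (Set.range f)) ^ n)
        (Ideal.span (Set.range fun i => f i ^ (l + 1))),
        r * z ∈ Ideal.span (Set.range fun i => f i ^ (l + 1))} ⊆
      {r : R | ∀ z ∈ aTightClosure p ((Ideal.span (Set.range f)) ^ n)
        (Ideal.span (Set.range fun i => f i ^ l)),
        r * z ∈ Ideal.span (Set.range fun i => f i ^ l)} := by
  have hmax (i : Fin d) : f i ∈ maximalIdeal R :=
    hprim ▸ Ideal.le_radical (Ideal.subset_span ⟨i, rfl⟩)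
  have hcolon := colon_span_pow_succ_prod f hreg.toIsWeaklyRegular hmax
    (Nat.one_le_iff_ne_zero.mp hl)
  intro r hr z hz
  have hFz := hr _ (mul_mem_aTightClosure hcolon.ge hz)
  rw [← hcolon, Submodule.mem_colon_singleton, smul_eq_mul, mul_right_comm, mul_assoc]
  exact hFz

/-- Let `(R,m)` be Noetherian local of characteristic `p`, `f₁, …, f_d` a regular
sequence generating an `m`-primary ideal `I`, and `I^{[l]} = (f₁^l, …, f_d^l)`.  For
fixed `n ≥ 1`, the colon ideals `J_l = I^{[l]} : (I^{[l]})^{*I^n}` satisfy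
`J_{l+1} ⊆ J_l` for all `l ≥ 1`. -/
theorem stmt10 {R : Type*} [CommRing R] [IsNoetherianRing R] [IsLocalRing R]
    (p : ℕ) (hp : p.Prime) [CharP R p]
    {d : ℕ} (f : Fin d → R)
    (hreg : RingTheory.Sequence.IsRegular R (List.ofFn f))
    (hprim : (Ideal.span (Set.range f)).radical = IsLocalRing.maximalIdeal R)
    (n : ℕ) (hn : 1 ≤ n) (l : ℕ) (hl : 1 ≤ l) :
    {r : R | ∀ z ∈ aTightClosure p ((Ideal.span (Set.range f)) ^ n)
        (Ideal.span (Set.range fun i => f i ^ (l + 1))),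
        r * z ∈ Ideal.span (Set.range fun i => f i ^ (l + 1))} ⊆
      {r : R | ∀ z ∈ aTightClosure p ((Ideal.span (Set.range f)) ^ n)
        (Ideal.span (Set.range fun i => f i ^ l)),
        r * z ∈ Ideal.span (Set.range fun i => f i ^ l)} :=
  stmt10_general p f hreg hprim n l hl
end

section
/- Let (R, m) be a Noetherian local ring of characteristic p, I an ideal with a regular sequence of generators, and suppose f·J^{*a} ⊆ K^{*a} and K : f = J for ideals J ⊆ K and a nonzerodivisor f. Then K : K^{*a} ⊆ J : J^{*a}. -/
theorem Ideal.mul_mem_of_colon_span_singleton_eq {R : Type*} [CommRing R] {J K : Ideal R}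
    {f r z : R} (hcolon : K.colon (Ideal.span {f}) = J) (h : r * (f * z) ∈ K) :
    r * z ∈ J := by
  rw [← hcolon, Ideal.mem_colon_span_singleton, mul_right_comm, mul_assoc]
  exact h

theorem stmt11_general {R : Type*} [CommRing R]
    (p : ℕ)
    (a J K : Ideal R)
    (f : R)
    (hmul : ∀ z ∈ aTightClosure p a J, f * z ∈ aTightClosure p a K)
    (hcolon : K.colon (Ideal.span {f}) = J) :
    ∀ r : R, (∀ z ∈ aTightClosure p a K, r * z ∈ K) →
      ∀ z ∈ aTightClosure p a J, r * z ∈ J :=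
  fun _ hr z hz => Ideal.mul_mem_of_colon_span_singleton_eq hcolon (hr _ (hmul z hz))

/-- Let `(R,m)` be Noetherian local of characteristic `p`, `I` an ideal generated by a
regular sequence, `a` an ideal, `J ⊆ K` ideals and `f` a nonzerodivisor with
`f·J^{*a} ⊆ K^{*a}` and `K : f = J`.  Then `K : K^{*a} ⊆ J : J^{*a}`. -/
theorem stmt11 {R : Type*} [CommRing R] [IsNoetherianRing R] [IsLocalRing R]
    (p : ℕ) (hp : p.Prime) [CharP R p]
    {d : ℕ} (g : Fin d → R)
    (hreg : RingTheory.Sequence.IsRegular R (List.ofFn g))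
    (I : Ideal R) (hI : I = Ideal.span (Set.range g))
    (a J K : Ideal R) (hJK : J ≤ K)
    (f : R) (hf : f ∈ nonZeroDivisors R)
    (hmul : ∀ z ∈ aTightClosure p a J, f * z ∈ aTightClosure p a K)
    (hcolon : K.colon (Ideal.span {f}) = J) :
    ∀ r : R, (∀ z ∈ aTightClosure p a K, r * z ∈ K) →
      ∀ z ∈ aTightClosure p a J, r * z ∈ J :=
  stmt11_general p a J K f hmul hcolon
end

section
/- Let (R, m) be a Noetherian local Cohen–Macaulay ring of dimension d, let I = (f₁, …, f_d) be a parameter ideal, and let 𝓘 = (I_n)_{n≥0} be a multiplicative filtration of ideals with I ⊆ I₁ whose associated graded ring G = ⊕_{n≥0} I_n/I_{n+1} is Cohen–Macaulay with the initial forms x₁, …, x_d of f₁, …, f_d forming a regular sequence on G. Then for all integers k ≥ 0 and l ≥ 1, I_{k+l} ∩ (f₁^l, …, f_d^l) = I_k · (f₁^l, …, f_d^l). -/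
/-!
Ideals of the associated graded ring `G = ⊕ 𝓘 m / 𝓘 (m + 1)` are encoded by families
`K : ℕ → Ideal R`. Initial forms of positive degree forming a `G`-regular sequence may be swapped,
and powers of a regular element are regular; combining the two (from `x*, y*` regular get
`y*, x*`, then `y*, (xᵃ)*`, then `(xᵃ)*, y*`) shows that `(f₁ˡ)*, …, (f_dˡ)*` is again `G`-regular.
For a `G`-regular sequence of initial forms `g₁*, …, g_d*` of degree `w`, adjoining the `gᵢ` one at
a time gives `𝓘 (m + 1) ∩ Σ gᵢ 𝓘 (m - w) ⊆ Σ gᵢ 𝓘 (m + 1 - w)`: if `z = y + g c` with `y` in the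
part already treated and `c ∈ 𝓘 (m - w)`, then `g* c* = 0` modulo the earlier initial forms, so
regularity moves `c` into `𝓘 (m + 1 - w)` at the cost of a correction absorbed by `y`. Iterating
from `m = l` to `m = k + l` gives the claim.
-/

section

open Ideal

variable {R : Type*} [CommRing R]

structure IsMulFiltration (𝓘 : ℕ → Ideal R) : Prop where
  zero_eq_top : 𝓘 0 = ⊤
  succ_le : ∀ n, 𝓘 (n + 1) ≤ 𝓘 n
  mul_le : ∀ m n, 𝓘 m * 𝓘 n ≤ 𝓘 (m + n)

namespace IsMulFiltration

variable {𝓘 : ℕ → Ideal R}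

theorem antitone (h𝓘 : IsMulFiltration 𝓘) : Antitone 𝓘 :=
  antitone_nat_of_succ_le h𝓘.succ_le

theorem mem_of_le (h𝓘 : IsMulFiltration 𝓘) {m n : ℕ} (h : m ≤ n) {x : R} (hx : x ∈ 𝓘 n) :
    x ∈ 𝓘 m :=
  h𝓘.antitone h hx

theorem mul_mem_of_le (h𝓘 : IsMulFiltration 𝓘) {a b n : ℕ} {x y : R} (hx : x ∈ 𝓘 a)
    (hy : y ∈ 𝓘 b) (h : n ≤ a + b) : x * y ∈ 𝓘 n :=
  h𝓘.mem_of_le h (h𝓘.mul_le a b (mul_mem_mul hx hy))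

theorem pow_mem (h𝓘 : IsMulFiltration 𝓘) {w : ℕ} {x : R} (hx : x ∈ 𝓘 w) (a : ℕ) :
    x ^ a ∈ 𝓘 (a * w) := by
  induction a with
  | zero => simp [h𝓘.zero_eq_top]
  | succ a ih => rw [pow_succ, add_one_mul]; exact h𝓘.mul_mem_of_le ih hx le_rfl

end IsMulFiltration

variable {𝓘 K K' : ℕ → Ideal R}

/-- For `m < w` the truncated index `m - w` is `0`; this is harmless, since then
`span S * 𝓘 0 ≤ 𝓘 (m + 1)` as soon as `S ⊆ 𝓘 w`. -/
def initSpan (𝓘 : ℕ → Ideal R) (S : Set R) (w : ℕ) : ℕ → Ideal R :=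
  fun m => span S * 𝓘 (m - w)

theorem initSpan_empty (w : ℕ) : initSpan 𝓘 ∅ w = ⊥ := by
  funext m; simp [initSpan]

theorem initSpan_insert (x : R) (S : Set R) (w : ℕ) :
    initSpan 𝓘 (insert x S) w = initSpan 𝓘 {x} w ⊔ initSpan 𝓘 S w := by
  funext m; simp [initSpan, span_insert, Ideal.sup_mul]

def MulStable (𝓘 K : ℕ → Ideal R) : Prop :=
  ∀ a m, 𝓘 a * K m ≤ K (m + a)

theorem mulStable_bot : MulStable 𝓘 ⊥ := fun _ _ => by simp

theorem MulStable.sup (hK : MulStable 𝓘 K) (hK' : MulStable 𝓘 K') : MulStable 𝓘 (K ⊔ K') :=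
  fun a m => by rw [Pi.sup_apply, Ideal.mul_sup]; exact sup_le_sup (hK a m) (hK' a m)

theorem IsMulFiltration.mulStable_initSpan (h𝓘 : IsMulFiltration 𝓘) (S : Set R) (w : ℕ) :
    MulStable 𝓘 (initSpan 𝓘 S w) := fun a m => by
  rw [initSpan, initSpan, mul_left_comm]
  exact mul_mono_right ((h𝓘.mul_le a _).trans (h𝓘.antitone (by omega)))

theorem MulStable.mul_mem (hK : MulStable 𝓘 K) {a m : ℕ} {g z : R} (hg : g ∈ 𝓘 a)
    (hz : z ∈ K m) : g * z ∈ K (m + a) :=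
  hK a m (mul_mem_mul hg hz)

theorem MulStable.mul_mem_sup (hK : MulStable 𝓘 K) (h𝓘 : IsMulFiltration 𝓘) {a m : ℕ}
    {g z : R} (hg : g ∈ 𝓘 a) (hz : z ∈ K m ⊔ 𝓘 (m + 1)) :
    g * z ∈ K (m + a) ⊔ 𝓘 (m + a + 1) := by
  obtain ⟨c, hc, h, hh, rfl⟩ := Submodule.mem_sup.1 hz
  rw [mul_add]
  exact Submodule.add_mem_sup (hK.mul_mem hg hc) (h𝓘.mul_mem_of_le hg hh (by omega))

/-- The initial form of `x` in degree `w` is a nonzerodivisor on `G / K`, where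
`G = ⊕ 𝓘 m / 𝓘 (m + 1)` and the family `K` stands for the ideal of `G` whose degree-`m` part
is the image of `K m ∩ 𝓘 m`. -/
def IsInitRegular (𝓘 K : ℕ → Ideal R) (x : R) (w : ℕ) : Prop :=
  ∀ n, ∀ y ∈ 𝓘 n, x * y ∈ K (n + w) ⊔ 𝓘 (n + w + 1) → y ∈ K n ⊔ 𝓘 (n + 1)

def IsStrict (𝓘 K : ℕ → Ideal R) : Prop :=
  ∀ m, K m ⊓ 𝓘 (m + 1) ≤ K (m + 1)

theorem isStrict_bot : IsStrict 𝓘 ⊥ := fun _ => inf_le_left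

theorem IsStrict.inf_le (hK : IsStrict 𝓘 K) (h𝓘 : IsMulFiltration 𝓘) {m n : ℕ} (h : m ≤ n) :
    K m ⊓ 𝓘 n ≤ K n := by
  induction n, h using Nat.le_induction with
  | base => exact inf_le_left
  | succ n _ ih =>
    exact fun z hz => hK n ⟨ih ⟨hz.1, h𝓘.mem_of_le (Nat.le_succ n) hz.2⟩, hz.2⟩

variable {x y : R} {w wx wy : ℕ}

namespace IsInitRegular

theorem mul (h𝓘 : IsMulFiltration 𝓘) (hy' : y ∈ 𝓘 wy) (hx : IsInitRegular 𝓘 K x wx)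
    (hy : IsInitRegular 𝓘 K y wy) : IsInitRegular 𝓘 K (x * y) (wx + wy) := by
  intro n z hz hxyz
  refine hy n z hz (hx (n + wy) (y * z) (h𝓘.mul_mem_of_le hy' hz (by omega)) ?_)
  rwa [← mul_assoc, show n + wy + wx = n + (wx + wy) by omega]

theorem pow (h𝓘 : IsMulFiltration 𝓘) (hx' : x ∈ 𝓘 w) (hx : IsInitRegular 𝓘 K x w) (a : ℕ) :
    IsInitRegular 𝓘 K (x ^ a) (a * w) := by
  induction a with
  | zero => intro n y _ h; simpa using h
  | succ a ih => rw [pow_succ, add_one_mul]; exact ih.mul h𝓘 hx' hx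

/-- `y* z* = 0` in `G / K` gives `z ≡ x u`; then `x* (y u)* = 0`, so `(y u)*` and, by induction
on the degree (which drops by `wx ≥ 1`), `u*` vanish in `G / K`. -/
theorem of_sup (h𝓘 : IsMulFiltration 𝓘) (hK : MulStable 𝓘 K) (hx' : x ∈ 𝓘 wx)
    (hy' : y ∈ 𝓘 wy) (hwx : 1 ≤ wx) (hx : IsInitRegular 𝓘 K x wx)
    (hy : IsInitRegular 𝓘 (K ⊔ initSpan 𝓘 {x} wx) y wy) : IsInitRegular 𝓘 K y wy := by
  intro n
  induction n using Nat.strong_induction_on with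
  | _ n ih =>
  intro z hz hyz
  have hyz' : y * z ∈ (K ⊔ initSpan 𝓘 {x} wx) (n + wy) ⊔ 𝓘 (n + wy + 1) :=
    sup_le_sup_right (le_sup_left : K (n + wy) ≤ _) _ hyz
  obtain ⟨c', hc', h, hh, rfl⟩ := Submodule.mem_sup.1 (hy n z hz hyz')
  obtain ⟨c, hc, xu, hxu, rfl⟩ := Submodule.mem_sup.1 hc'
  obtain ⟨u, hu, rfl⟩ := mem_span_singleton_mul.1 hxu
  suffices hxu : x * u ∈ K n ⊔ 𝓘 (n + 1) from
    add_mem (add_mem (mem_sup_left hc) hxu) (mem_sup_right hh)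
  rcases lt_or_ge n wx with hn | hn
  · exact mem_sup_right (h𝓘.mul_mem_of_le hx' hu (by omega))
  have hxyu : x * (y * u) ∈ K (n - wx + wy + wx) ⊔ 𝓘 (n - wx + wy + wx + 1) := by
    rw [show n - wx + wy + wx = n + wy by omega,
      show x * (y * u) = y * (c + x * u + h) - y * c - y * h by ring]
    exact sub_mem (sub_mem hyz (mem_sup_left (hK.mul_mem hy' hc)))
      (mem_sup_right (h𝓘.mul_mem_of_le hy' hh (by omega)))
  have hyu := hx _ _ (h𝓘.mul_mem_of_le hy' hu (by omega)) hxyu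
  have := hK.mul_mem_sup h𝓘 hx' (ih (n - wx) (by omega) u hu hyu)
  rwa [Nat.sub_add_cancel hn] at this

/-- `x* z* ∈ (K, y*)` means `x z ≡ y v`, so `y* v* ∈ (K, x*)` and `v ≡ x u`; then
`x* (z - y u)* = 0` in `G / K`. -/
theorem sup_swap (h𝓘 : IsMulFiltration 𝓘) (hK : MulStable 𝓘 K) (hy' : y ∈ 𝓘 wy)
    (hx : IsInitRegular 𝓘 K x wx)
    (hy : IsInitRegular 𝓘 (K ⊔ initSpan 𝓘 {x} wx) y wy) :
    IsInitRegular 𝓘 (K ⊔ initSpan 𝓘 {y} wy) x wx := by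
  intro n z hz hxz
  obtain ⟨c', hc', h, hh, hxz_eq⟩ := Submodule.mem_sup.1 hxz
  obtain ⟨c, hc, yv, hyv, rfl⟩ := Submodule.mem_sup.1 hc'
  obtain ⟨v, hv, rfl⟩ := mem_span_singleton_mul.1 hyv
  rcases lt_or_ge (n + wx) wy with hn | hn
  · have hyv : y * v ∈ 𝓘 (n + wx + 1) := h𝓘.mul_mem_of_le hy' hv (by omega)
    have hxz' : x * z ∈ K (n + wx) ⊔ 𝓘 (n + wx + 1) := by
      rw [← hxz_eq, show c + y * v + h = c + (h + y * v) by ring]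
      exact Submodule.add_mem_sup hc (add_mem hh hyv)
    exact sup_le_sup_right (le_sup_left : K n ≤ _) _ (hx n z hz hxz')
  set nv := n + wx - wy with hnv
  have hv' : v ∈ (K ⊔ initSpan 𝓘 {x} wx) nv ⊔ 𝓘 (nv + 1) := by
    refine hy nv v hv ?_
    have hxz' : x * z ∈ initSpan 𝓘 {x} wx (n + wx) :=
      mem_span_singleton_mul.2 ⟨z, by rwa [Nat.add_sub_cancel], rfl⟩
    rw [show nv + wy = n + wx by omega, show y * v = x * z - c - h by rw [← hxz_eq]; ring]
    exact sub_mem (sub_mem (mem_sup_left (mem_sup_right hxz')) (mem_sup_left (mem_sup_left hc)))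
      (mem_sup_right hh)
  obtain ⟨cv', hcv', h', hh', rfl⟩ := Submodule.mem_sup.1 hv'
  obtain ⟨cv, hcv, xu, hxu, rfl⟩ := Submodule.mem_sup.1 hcv'
  obtain ⟨u, hu, rfl⟩ := mem_span_singleton_mul.1 hxu
  have hzyu : z - y * u ∈ K n ⊔ 𝓘 (n + 1) := by
    have hyu : y * u ∈ 𝓘 n := h𝓘.mul_mem_of_le hy' hu (by omega)
    refine hx n _ (sub_mem hz hyu) ?_
    have hycv : y * cv ∈ K (n + wx) := by
      simpa only [show nv + wy = n + wx by omega] using hK.mul_mem hy' hcv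
    have hyh' : y * h' ∈ 𝓘 (n + wx + 1) := h𝓘.mul_mem_of_le hy' hh' (by omega)
    rw [show x * (z - y * u) = (c + y * cv) + (h + y * h') by linear_combination -hxz_eq]
    exact Submodule.add_mem_sup (add_mem hc hycv) (add_mem hh hyh')
  have hyu : y * u ∈ initSpan 𝓘 {y} wy n :=
    mem_span_singleton_mul.2 ⟨u, by rwa [show n - wy = nv - wx by omega], rfl⟩
  obtain ⟨a, ha, b, hb, hab⟩ := Submodule.mem_sup.1 hzyu
  rw [show z = a + y * u + b by linear_combination -hab]
  exact Submodule.add_mem_sup (Submodule.add_mem_sup ha hyu) hb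

theorem sup_pow (h𝓘 : IsMulFiltration 𝓘) (hK : MulStable 𝓘 K) (hx' : x ∈ 𝓘 wx)
    (hy' : y ∈ 𝓘 wy) (hwx : 1 ≤ wx) (hx : IsInitRegular 𝓘 K x wx)
    (hy : IsInitRegular 𝓘 (K ⊔ initSpan 𝓘 {x} wx) y wy) (a : ℕ) :
    IsInitRegular 𝓘 (K ⊔ initSpan 𝓘 {x ^ a} (a * wx)) y wy :=
  (hx.of_sup h𝓘 hK hx' hy' hwx hy).sup_swap h𝓘 hK (h𝓘.pow_mem hx' a)
    ((hx.sup_swap h𝓘 hK hy' hy).pow h𝓘 hx' a)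

end IsInitRegular

theorem IsStrict.sup_initSpan (h𝓘 : IsMulFiltration 𝓘) (hK : MulStable 𝓘 K)
    (hKs : IsStrict 𝓘 K) (hx' : x ∈ 𝓘 w) (hx : IsInitRegular 𝓘 K x w) :
    IsStrict 𝓘 (K ⊔ initSpan 𝓘 {x} w) := by
  rintro m z ⟨hz, hzm⟩
  obtain ⟨y, hy, xc, hxc, rfl⟩ := Submodule.mem_sup.1 hz
  obtain ⟨c, hc, rfl⟩ := mem_span_singleton_mul.1 hxc
  rcases lt_or_ge m w with hm | hm
  · have hxc : x * c ∈ 𝓘 (m + 1) := h𝓘.mul_mem_of_le hx' hc (by omega)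
    refine Submodule.add_mem_sup (hKs m ⟨hy, by simpa using sub_mem hzm hxc⟩) ?_
    exact mem_span_singleton_mul.2 ⟨c, by rwa [show m + 1 - w = m - w by omega], rfl⟩
  have hxc : x * c ∈ K (m - w + w) ⊔ 𝓘 (m - w + w + 1) := by
    rw [Nat.sub_add_cancel hm, show x * c = y + x * c - y by ring]
    exact sub_mem (mem_sup_right hzm) (mem_sup_left hy)
  obtain ⟨e, he, v, hv, rfl⟩ := Submodule.mem_sup.1 (hx (m - w) c hc hxc)
  have hxe : x * e ∈ K m := by simpa only [Nat.sub_add_cancel hm] using hK.mul_mem hx' he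
  have hxv : x * v ∈ 𝓘 (m + 1) := h𝓘.mul_mem_of_le hx' hv (by omega)
  rw [show y + x * (e + v) = (y + x * e) + x * v by ring]
  refine Submodule.add_mem_sup (hKs m ⟨add_mem hy hxe, ?_⟩) ?_
  · have := sub_mem hzm hxv
    rwa [show y + x * (e + v) - x * v = y + x * e by ring] at this
  · exact mem_span_singleton_mul.2 ⟨v, by rwa [show m + 1 - w = m - w + 1 by omega], rfl⟩

def IsInitRegularSeq (𝓘 : ℕ → Ideal R) : (ℕ → Ideal R) → ℕ → List R → Prop
  | _, _, [] => True
  | K, w, x :: L => IsInitRegular 𝓘 K x w ∧ IsInitRegularSeq 𝓘 (K ⊔ initSpan 𝓘 {x} w) w L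

namespace IsInitRegularSeq

theorem sup_pow (h𝓘 : IsMulFiltration 𝓘) {L : List R} (hL : ∀ y ∈ L, y ∈ 𝓘 w)
    (hK : MulStable 𝓘 K) (hx' : x ∈ 𝓘 wx) (hwx : 1 ≤ wx) (hx : IsInitRegular 𝓘 K x wx)
    (hseq : IsInitRegularSeq 𝓘 (K ⊔ initSpan 𝓘 {x} wx) w L) (a : ℕ) :
    IsInitRegularSeq 𝓘 (K ⊔ initSpan 𝓘 {x ^ a} (a * wx)) w L := by
  induction L generalizing K with
  | nil => trivial
  | cons y L ih =>
    obtain ⟨hy, hseq⟩ := hseq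
    have hy' : y ∈ 𝓘 w := hL y List.mem_cons_self
    refine ⟨hx.sup_pow h𝓘 hK hx' hy' hwx hy a, ?_⟩
    rw [sup_right_comm] at hseq ⊢
    exact ih (fun z hz => hL z (List.mem_cons_of_mem y hz))
      (hK.sup (h𝓘.mulStable_initSpan _ _)) (hx.sup_swap h𝓘 hK hy' hy) hseq

theorem map_pow (h𝓘 : IsMulFiltration 𝓘) (hw : 1 ≤ w) {L : List R} (hL : ∀ y ∈ L, y ∈ 𝓘 w)
    (hK : MulStable 𝓘 K) (hseq : IsInitRegularSeq 𝓘 K w L) (a : ℕ) :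
    IsInitRegularSeq 𝓘 K (a * w) (L.map (· ^ a)) := by
  induction L generalizing K with
  | nil => trivial
  | cons x L ih =>
    obtain ⟨hx, hseq⟩ := hseq
    have hx' : x ∈ 𝓘 w := hL x List.mem_cons_self
    have hL' : ∀ y ∈ L, y ∈ 𝓘 w := fun y hy => hL y (List.mem_cons_of_mem x hy)
    exact ⟨hx.pow h𝓘 hx' a, ih hL' (hK.sup (h𝓘.mulStable_initSpan _ _))
      (hseq.sup_pow h𝓘 hL' hK hx' hw hx a)⟩

theorem isStrict_sup (h𝓘 : IsMulFiltration 𝓘) {L : List R} (hL : ∀ y ∈ L, y ∈ 𝓘 w)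
    (hK : MulStable 𝓘 K) (hKs : IsStrict 𝓘 K) (hseq : IsInitRegularSeq 𝓘 K w L) :
    IsStrict 𝓘 (K ⊔ initSpan 𝓘 {y | y ∈ L} w) := by
  induction L generalizing K with
  | nil => simpa [initSpan_empty] using hKs
  | cons x L ih =>
    obtain ⟨hx, hseq⟩ := hseq
    have hx' : x ∈ 𝓘 w := hL x List.mem_cons_self
    have hset : {y | y ∈ x :: L} = insert x {y | y ∈ L} := by ext; simp
    rw [hset, initSpan_insert, ← sup_assoc]
    exact ih (fun y hy => hL y (List.mem_cons_of_mem x hy)) (hK.sup (h𝓘.mulStable_initSpan _ _))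
      (hKs.sup_initSpan h𝓘 hK hx' hx) hseq

end IsInitRegularSeq

theorem image_Iio_succ {α : Type*} {d : ℕ} (f : Fin (d + 1) → α) (i : Fin d) :
    f '' Set.Iio i.succ = insert (f 0) ((fun j => f j.succ) '' Set.Iio i) := by
  ext y
  simp [Fin.exists_fin_succ, Fin.succ_pos, eq_comm]

theorem isInitRegularSeq_ofFn {d : ℕ} (f : Fin d → R)
    (h : ∀ i, IsInitRegular 𝓘 (K ⊔ initSpan 𝓘 (f '' Set.Iio i) w) (f i) w) :
    IsInitRegularSeq 𝓘 K w (List.ofFn f) := by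
  induction d generalizing K with
  | zero => trivial
  | succ d ih =>
    rw [List.ofFn_succ]
    refine ⟨by simpa [initSpan_empty] using h 0, ih _ fun i => ?_⟩
    simpa only [image_Iio_succ, initSpan_insert, ← sup_assoc] using h i.succ

theorem IsMulFiltration.inf_span_eq_mul (h𝓘 : IsMulFiltration 𝓘) {S : Set R}
    (hS : span S ≤ 𝓘 w) (hSs : IsStrict 𝓘 (initSpan 𝓘 S w)) (k : ℕ) :
    𝓘 (k + w) ⊓ span S = 𝓘 k * span S := by
  refine le_antisymm ?_ (le_inf ((mul_mono_right hS).trans (h𝓘.mul_le k w)) Ideal.mul_le_right)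
  have := hSs.inf_le h𝓘 (show w ≤ k + w by omega)
  simpa [initSpan, h𝓘.zero_eq_top, mul_comm, inf_comm] using this

theorem span_image_Iio_mul {d : ℕ} (f : Fin d → R) (i : Fin d) (I : Ideal R) :
    span (f '' Set.Iio i) * I = ⨆ j : Fin d, ⨆ _ : j < i, span {f j} * I := by
  simp only [Set.image_eq_iUnion, span_iUnion, Ideal.iSup_mul, Set.mem_Iio]

end

theorem stmt12_general {R : Type*} [CommRing R]
    {d : ℕ}
    (f : Fin d → R)
    (𝓘 : ℕ → Ideal R) (h0 : 𝓘 0 = ⊤) (hdec : ∀ n, 𝓘 (n + 1) ≤ 𝓘 n)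
    (hmul : ∀ n m : ℕ, 𝓘 n * 𝓘 m ≤ 𝓘 (n + m))
    (hI1 : Ideal.span (Set.range f) ≤ 𝓘 1)
    -- the initial forms of `f₁,…,f_d` form a regular sequence on the associated graded
    -- ring of the filtration, written out element-wise:
    (hregG : ∀ (i : Fin d) (n : ℕ), ∀ y ∈ 𝓘 n,
      f i * y ∈ (⨆ j : Fin d, ⨆ _ : j < i, Ideal.span {f j} * 𝓘 n) ⊔ 𝓘 (n + 2) →
      y ∈ (⨆ j : Fin d, ⨆ _ : j < i, Ideal.span {f j} * 𝓘 (n - 1)) ⊔ 𝓘 (n + 1)) :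
    ∀ (k l : ℕ), 1 ≤ l →
      𝓘 (k + l) ⊓ Ideal.span (Set.range fun i => f i ^ l) =
        𝓘 k * Ideal.span (Set.range fun i => f i ^ l) := by
  intro k l _
  have h𝓘 : IsMulFiltration 𝓘 := ⟨h0, hdec, hmul⟩
  have hf : ∀ x ∈ List.ofFn f, x ∈ 𝓘 1 := by
    intro x hx
    obtain ⟨i, rfl⟩ := List.mem_ofFn.1 hx
    exact hI1 (Ideal.subset_span ⟨i, rfl⟩)
  have hreg : IsInitRegularSeq 𝓘 ⊥ 1 (List.ofFn f) :=
    isInitRegularSeq_ofFn f fun i n y hy hfy => by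
      simp only [initSpan, span_image_Iio_mul, Pi.sup_apply, Pi.bot_apply, bot_sup_eq,
        add_tsub_cancel_right] at hfy ⊢
      exact hregG i n y hy hfy
  have hset : {y | y ∈ (List.ofFn f).map (· ^ l)} = Set.range fun i => f i ^ l := by
    ext; simp [List.mem_ofFn]
  have hfl : ∀ x ∈ (List.ofFn f).map (· ^ l), x ∈ 𝓘 (l * 1) := by
    simpa using fun i => h𝓘.pow_mem (hf _ (List.mem_ofFn.2 ⟨i, rfl⟩)) l
  have hstrict := (hreg.map_pow h𝓘 le_rfl hf mulStable_bot l).isStrict_sup h𝓘 hfl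
    mulStable_bot isStrict_bot
  rw [hset, bot_sup_eq, mul_one] at hstrict
  refine h𝓘.inf_span_eq_mul (Ideal.span_le.2 fun x hx => ?_) hstrict k
  simpa using hfl x (by simpa [← hset] using hx)

/-- Valabrega–Valla type statement.  Let `(R,m)` be a Noetherian Cohen–Macaulay local
ring of dimension `d` (Cohen–Macaulayness expressed as the existence of a regular
sequence of length `d` in `m`), `I = (f₁,…,f_d)` a parameter ideal, and `𝓘 = (I_n)` a
multiplicative filtration with `I ⊆ I₁` whose initial forms `x₁,…,x_d` of the `fᵢ` form
a regular sequence on the associated graded ring `G = ⊕ I_n/I_{n+1}` (expressed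
element-wise in terms of the filtration).  Then for all `k ≥ 0` and `l ≥ 1`,
`I_{k+l} ∩ (f₁^l,…,f_d^l) = I_k·(f₁^l,…,f_d^l)`. -/
theorem stmt12 {R : Type*} [CommRing R] [IsNoetherianRing R] [IsLocalRing R]
    {d : ℕ} (hdim : (d : WithBot ℕ∞) = ringKrullDim R)
    (hCM : ∃ rs : List R, (∀ r ∈ rs, r ∈ IsLocalRing.maximalIdeal R) ∧
      RingTheory.Sequence.IsRegular R rs ∧ (rs.length : WithBot ℕ∞) = ringKrullDim R)
    (f : Fin d → R)
    (hparam : (Ideal.span (Set.range f)).radical = IsLocalRing.maximalIdeal R)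
    (𝓘 : ℕ → Ideal R) (h0 : 𝓘 0 = ⊤) (hdec : ∀ n, 𝓘 (n + 1) ≤ 𝓘 n)
    (hmul : ∀ n m : ℕ, 𝓘 n * 𝓘 m ≤ 𝓘 (n + m))
    (hI1 : Ideal.span (Set.range f) ≤ 𝓘 1)
    -- the initial forms of `f₁,…,f_d` form a regular sequence on the associated graded
    -- ring of the filtration, written out element-wise:
    (hregG : ∀ (i : Fin d) (n : ℕ), ∀ y ∈ 𝓘 n,
      f i * y ∈ (⨆ j : Fin d, ⨆ _ : j < i, Ideal.span {f j} * 𝓘 n) ⊔ 𝓘 (n + 2) →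
      y ∈ (⨆ j : Fin d, ⨆ _ : j < i, Ideal.span {f j} * 𝓘 (n - 1)) ⊔ 𝓘 (n + 1)) :
    ∀ (k l : ℕ), 1 ≤ l →
      𝓘 (k + l) ⊓ Ideal.span (Set.range fun i => f i ^ l) =
        𝓘 k * Ideal.span (Set.range fun i => f i ^ l) :=
  stmt12_general f 𝓘 h0 hdec hmul hI1 hregG
end

section
/- Let (R, m) be a d-dimensional excellent Cohen–Macaulay normal local domain of characteristic p > 0, I = (f₁, …, f_d) a parameter ideal, and n, l positive integers with dl − n ≥ 1. Then the inclusion closure(I^{dl−n}) + I^{[l]} ⊆ (I^{[l]})^{*I^n} holds, where closure denotes integral closure of ideals, I^{[l]} = (f₁^l, …, f_d^l), and (I^{[l]})^{*I^n} is the I^n-tight closure of I^{[l]}. -/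
/-- Membership in the integral closure of an ideal `J`: `x` satisfies an equation
`x^k + a₁x^{k-1} + ⋯ + a_k = 0` with `aᵢ ∈ J^i`. -/
def memIntCl {R : Type*} [CommRing R] (J : Ideal R) (x : R) : Prop :=
  ∃ k : ℕ, 1 ≤ k ∧ ∃ a : ℕ → R, (∀ i ∈ Finset.Icc 1 k, a i ∈ J ^ i) ∧
    x ^ k + ∑ i ∈ Finset.Icc 1 k, a i * x ^ (k - i) = 0

/-!
Take `c = x^m` where `x` is integral over `I^{dl-n}` with an equation of degree `m + 1`; then
`x^{m+q} ∈ I^{(dl-n)q}` for every `q`, so `c (I^n)^q x^q ⊆ I^{dlq}`, and by the pigeonhole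
principle `I^{dlq} ⊆ (f₁^{lq}, …, f_d^{lq}) = (I^{[l]})^{[q]}`.  Elements of `I^{[l]}` lie in its
`I^n`-tight closure trivially, and `a`-tight closure is closed under addition since
`(x + y)^q = x^q + y^q`.
-/

section ringReg

variable {R : Type*} [CommRing R]

lemma one_mem_ringReg : (1 : R) ∈ ringReg R :=
  fun _ hP h => hP.1.1.ne_top ((Ideal.eq_top_iff_one _).2 h)

lemma mul_mem_ringReg {b c : R} (hb : b ∈ ringReg R) (hc : c ∈ ringReg R) :
    b * c ∈ ringReg R :=
  fun P hP h => (hP.1.1.mem_or_mem h).elim (hb P hP) (hc P hP)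

lemma mem_ringReg_of_ne_zero [IsDomain R] {c : R} (hc : c ≠ 0) : c ∈ ringReg R := by
  intro P hP hcP
  rw [IsDomain.minimalPrimes_eq_singleton_bot, Set.mem_singleton_iff] at hP
  exact hc (by simpa [hP] using hcP)

end ringReg

section frobPow

variable {R : Type*} [CommRing R]

lemma pow_mem_frobPow {J : Ideal R} {z : R} (hz : z ∈ J) (q : ℕ) : z ^ q ∈ frobPow J q :=
  Ideal.subset_span ⟨z, hz, rfl⟩

lemma span_range_pow_le_frobPow {ι : Type*} (g : ι → R) (q : ℕ) :
    Ideal.span (Set.range fun i => g i ^ q) ≤ frobPow (Ideal.span (Set.range g)) q := by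
  rw [Ideal.span_le]
  rintro _ ⟨i, rfl⟩
  exact pow_mem_frobPow (Ideal.subset_span (Set.mem_range_self i)) q

end frobPow

section aTightClosure

variable {R : Type*} [CommRing R] {p : ℕ} {a J : Ideal R}

lemma subset_aTightClosure {z : R} (hz : z ∈ J) : z ∈ aTightClosure p a J :=
  ⟨1, one_mem_ringReg, 0, fun _ _ _ _ => Ideal.mul_mem_left _ _ (pow_mem_frobPow hz _)⟩

lemma add_mem_aTightClosure [ExpChar R p] {z w : R} (hz : z ∈ aTightClosure p a J)
    (hw : w ∈ aTightClosure p a J) : z + w ∈ aTightClosure p a J := by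
  obtain ⟨b, hb, E, hbz⟩ := hz
  obtain ⟨c, hc, F, hcw⟩ := hw
  refine ⟨b * c, mul_mem_ringReg hb hc, max E F, fun e he y hy => ?_⟩
  have hsplit : b * c * y * (z + w) ^ p ^ e =
      c * (b * y * z ^ p ^ e) + b * (c * y * w ^ p ^ e) := by
    rw [add_pow_expChar_pow]; ring
  rw [hsplit]
  exact Ideal.add_mem _
    (Ideal.mul_mem_left _ _ (hbz e (le_of_max_le_left he) y hy))
    (Ideal.mul_mem_left _ _ (hcw e (le_of_max_le_right he) y hy))

end aTightClosure

/-- The equation `x^k = -∑ aᵢ x^{k-i}` with `aᵢ ∈ J^i` gives `x^N ∈ J^{N+1-k}` by strong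
induction on `N`. -/
lemma exists_pow_add_mem_pow_of_memIntCl {R : Type*} [CommRing R] {J : Ideal R} {x : R}
    (hx : memIntCl J x) : ∃ m, ∀ q, x ^ (m + q) ∈ J ^ q := by
  obtain ⟨k, hk, a, ha, heq⟩ := hx
  have hpow : ∀ N, x ^ N ∈ J ^ (N + 1 - k) := by
    intro N
    induction N using Nat.strong_induction_on with
    | _ N ih =>
      by_cases hN : N < k
      · simp [Nat.sub_eq_zero_of_le hN]
      have hxN : x ^ N = -∑ i ∈ Finset.Icc 1 k, a i * x ^ (N - i) := by
        rw [← Nat.sub_add_cancel (not_lt.1 hN), pow_add, eq_neg_of_add_eq_zero_left heq,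
          mul_neg, Finset.mul_sum]
        congr 1
        refine Finset.sum_congr rfl fun i hi => ?_
        rw [mul_left_comm, ← pow_add]
        congr 2
        have := (Finset.mem_Icc.1 hi).2
        omega
      rw [hxN]
      refine neg_mem (Submodule.sum_mem _ fun i hi => ?_)
      have hi1 := (Finset.mem_Icc.1 hi).1
      have hmem := Ideal.mul_mem_mul (ha i hi) (ih (N - i) (by omega))
      rw [← pow_add] at hmem
      exact Ideal.pow_le_pow_right (by omega) hmem
  exact ⟨k - 1, fun q => by simpa [show k - 1 + q + 1 - k = q by omega] using hpow (k - 1 + q)⟩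

lemma mem_aTightClosure_of_memIntCl {R : Type*} [CommRing R] [IsDomain R] {p : ℕ}
    {a J K : Ideal R} {x : R} (hx : memIntCl K x)
    (hK : ∀ e, a ^ p ^ e * K ^ p ^ e ≤ frobPow J (p ^ e)) : x ∈ aTightClosure p a J := by
  rcases eq_or_ne x 0 with rfl | hx0
  · exact subset_aTightClosure J.zero_mem
  obtain ⟨m, hm⟩ := exists_pow_add_mem_pow_of_memIntCl hx
  refine ⟨x ^ m, mem_ringReg_of_ne_zero (pow_ne_zero _ hx0), 0, fun e _ y hy => hK e ?_⟩
  rw [mul_comm (x ^ m) y, mul_assoc, ← pow_add]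
  exact Ideal.mul_mem_mul hy (hm _)

/-- Pigeonhole: a monomial of degree `(d+1)m` in `f₀, …, f_d` is divisible by some `fᵢ^m`. -/
lemma Ideal.span_range_pow_le_span_range_pow {R : Type*} [CommRing R] :
    ∀ (d : ℕ) (f : Fin (d + 1) → R) (m : ℕ),
      Ideal.span (Set.range f) ^ ((d + 1) * m) ≤ Ideal.span (Set.range fun i => f i ^ m)
  | 0, f, m => by
    simp [Fin.range_fin_succ, Set.range_eq_empty, Ideal.span_singleton_pow]
  | d + 1, f, m => by
    rw [Fin.range_fin_succ f, Set.insert_eq, Ideal.span_union,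
      show (d + 1 + 1) * m = m + (d + 1) * m by ring]
    refine Ideal.sup_pow_add_le_pow_sup_pow.trans (sup_le ?_ ?_)
    · rw [Ideal.span_singleton_pow, Ideal.span_singleton_le_iff_mem]
      exact Ideal.subset_span ⟨0, rfl⟩
    · refine (span_range_pow_le_span_range_pow d (Fin.tail f) m).trans (Ideal.span_mono ?_)
      rintro _ ⟨i, rfl⟩
      exact ⟨i.succ, rfl⟩

theorem stmt16_general {R : Type*} [CommRing R] [IsDomain R] (p : ℕ) (hp : p.Prime) [CharP R p]
    {d : ℕ} (f : Fin d → R) (n l : ℕ) (hln : n + 1 ≤ d * l) :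
    ∀ x, memIntCl ((Ideal.span (Set.range f)) ^ (d * l - n)) x →
      ∀ y ∈ Ideal.span (Set.range fun i => f i ^ l),
        x + y ∈ aTightClosure p ((Ideal.span (Set.range f)) ^ n)
          (Ideal.span (Set.range fun i => f i ^ l)) := by
  intro x hx y hy
  have := ExpChar.prime (R := R) hp
  obtain ⟨d, rfl⟩ : ∃ d', d = d' + 1 :=
    Nat.exists_eq_succ_of_ne_zero (by rintro rfl; simp at hln)
  refine add_mem_aTightClosure (mem_aTightClosure_of_memIntCl hx fun e => ?_)
    (subset_aTightClosure hy)
  calc _ = Ideal.span (Set.range f) ^ ((d + 1) * (l * p ^ e)) := by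
        rw [← pow_mul, ← pow_mul, ← pow_add, ← add_mul, Nat.add_sub_cancel' (by omega), mul_assoc]
    _ ≤ Ideal.span (Set.range fun i => f i ^ (l * p ^ e)) :=
        Ideal.span_range_pow_le_span_range_pow d f _
    _ ≤ frobPow (Ideal.span (Set.range fun i => f i ^ l)) (p ^ e) := by
        simp only [pow_mul]
        exact span_range_pow_le_frobPow _ _

/-- Let `(R,m)` be a `d`-dimensional (excellent) Cohen–Macaulay normal local domain of
characteristic `p > 0`, `I = (f₁,…,f_d)` a parameter ideal, and `n, l ≥ 1` with
`dl − n ≥ 1`.  Then `closure(I^{dl−n}) + I^{[l]} ⊆ (I^{[l]})^{*I^n}`. -/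
theorem stmt16 {R : Type*} [CommRing R] [IsNoetherianRing R] [IsLocalRing R]
    [IsDomain R] [IsIntegrallyClosed R]
    (p : ℕ) (hp : p.Prime) [CharP R p]
    {d : ℕ} (hd : 2 ≤ d) (hdim : (d : WithBot ℕ∞) = ringKrullDim R)
    (hCM : ∃ rs : List R, (∀ r ∈ rs, r ∈ IsLocalRing.maximalIdeal R) ∧
      RingTheory.Sequence.IsRegular R rs ∧ (rs.length : WithBot ℕ∞) = ringKrullDim R)
    (f : Fin d → R)
    (hparam : (Ideal.span (Set.range f)).radical = IsLocalRing.maximalIdeal R)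
    (n l : ℕ) (hn : 1 ≤ n) (hl : 1 ≤ l) (hln : n + 1 ≤ d * l) :
    ∀ x, memIntCl ((Ideal.span (Set.range f)) ^ (d * l - n)) x →
      ∀ y ∈ Ideal.span (Set.range fun i => f i ^ l),
        x + y ∈ aTightClosure p ((Ideal.span (Set.range f)) ^ n)
          (Ideal.span (Set.range fun i => f i ^ l)) :=
  stmt16_general p hp f n l hln
end

section
/- Let p ≥ 3 be a prime, e ≥ 1, and consider the polynomial f = X₀² + X₁² + X₂^m over a field of characteristic p, with m ≥ 2. The coefficient of the monomial X₀^{p^e−3} X₁^{p^e−1} X₂^m in the multinomial expansion of f^{p^e−1} is C(p^e−1, (p^e−3)/2) · ((p^e+1)/2) modulo p, and this is nonzero modulo p. -/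
/-!
With `q = p ^ e`, the only term of the trinomial expansion of `f ^ (q - 1)` with the given
exponents takes `X₀²` `(q - 3) / 2` times, `X₁²` `(q - 1) / 2` times and `X₂ ^ m` once; its
multinomial coefficient is `(q - 1) · C(q - 2, (q - 3) / 2) = C(q - 1, (q - 3) / 2) · (q + 1) / 2`.
By Lucas's theorem every base-`p` digit of `q - 1` is `p - 1`, so `p` divides no `C(q - 1, k)`,
and `p ∤ (q + 1) / 2` because `p ∣ q`.
-/

open MvPolynomial

theorem Nat.Prime.not_dvd_choose_of_lt {p n k : ℕ} (hp : p.Prime) (hn : n < p) (hk : k ≤ n) :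
    ¬ p ∣ n.choose k := fun h => by
  have : p ∣ n.factorial := Nat.choose_mul_factorial_mul_factorial hk ▸ (h.mul_right _).mul_right _
  exact absurd (hp.dvd_factorial.mp this) (by omega)

-- Lucas: every base-`p` digit of `p ^ e - 1` is `p - 1`, so no digit of `k` exceeds it.
theorem Nat.Prime.not_dvd_choose_pow_sub_one {p : ℕ} (hp : p.Prime) (e : ℕ) {k : ℕ}
    (hk : k ≤ p ^ e - 1) : ¬ p ∣ (p ^ e - 1).choose k := by
  have : Fact p.Prime := ⟨hp⟩
  have := hp.two_le
  induction e generalizing k with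
  | zero => simp_all [hp.ne_one]
  | succ e ih =>
    have hdigits : p ^ (e + 1) - 1 = (p - 1) + p * (p ^ e - 1) := by
      have : p ≤ p * p ^ e := Nat.le_mul_of_pos_right p (pow_pos hp.pos e)
      rw [pow_succ', Nat.mul_sub_one]
      omega
    have hdiv : (p ^ (e + 1) - 1) / p = p ^ e - 1 := by
      rw [hdigits, Nat.add_mul_div_left _ _ hp.pos,
        Nat.div_eq_of_lt (by omega : p - 1 < p), zero_add]
    have hmod : (p ^ (e + 1) - 1) % p = p - 1 := by
      rw [hdigits, Nat.add_mul_mod_self_left, Nat.mod_eq_of_lt (by omega)]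
    have hkp : k / p ≤ p ^ e - 1 := by
      have := pow_pos hp.pos (e + 1)
      have : k / p < p ^ e := (Nat.div_lt_iff_lt_mul hp.pos).mpr (by rw [← pow_succ]; omega)
      omega
    rw [(Choose.choose_modEq_choose_mod_mul_choose_div_nat).dvd_iff dvd_rfl, hmod, hdiv,
      hp.dvd_mul, not_or]
    exact ⟨hp.not_dvd_choose_of_lt (by omega) (by have := Nat.mod_lt k hp.pos; omega), ih hkp⟩

section Trinomial

variable {R : Type*} [CommSemiring R]

theorem trinomial_pow_eq_sum (a b c n : ℕ) :
    (X 0 ^ a + X 1 ^ b + X 2 ^ c : MvPolynomial (Fin 3) R) ^ n =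
      ∑ k ∈ Finset.range (n + 1), ∑ t ∈ Finset.range (k + 1),
        monomial (Finsupp.single 0 (a * t) + Finsupp.single 1 (b * (k - t))
          + Finsupp.single 2 (c * (n - k))) ((n.choose k * k.choose t : ℕ) : R) := by
  rw [add_pow]
  refine Finset.sum_congr rfl fun k _ => ?_
  rw [add_pow, Finset.sum_mul, Finset.sum_mul]
  refine Finset.sum_congr rfl fun t _ => ?_
  simp only [X_pow_eq_monomial, monomial_pow, one_pow, Finsupp.smul_single, smul_eq_mul,
    ← C_eq_coe_nat, C_apply, monomial_mul]
  congr 1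
  · simp only [mul_comm, add_zero]
  · push_cast; ring

theorem coeff_trinomial_pow {a b : ℕ} (ha : a ≠ 0) (hb : b ≠ 0) (c i j l : ℕ) :
    coeff (Finsupp.single 0 (a * i) + Finsupp.single 1 (b * j) + Finsupp.single 2 (c * l))
        ((X 0 ^ a + X 1 ^ b + X 2 ^ c : MvPolynomial (Fin 3) R) ^ (i + j + l)) =
      (((i + j + l).choose (i + j) * (i + j).choose i : ℕ) : R) := by
  have exponents_eq {k t : ℕ} (htk : t ≤ k)
      (h : Finsupp.single 0 (a * t) + Finsupp.single 1 (b * (k - t))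
        + Finsupp.single (2 : Fin 3) (c * (i + j + l - k)) =
        Finsupp.single 0 (a * i) + Finsupp.single 1 (b * j) + Finsupp.single 2 (c * l)) :
      k = i + j ∧ t = i := by
    have h0 := DFunLike.congr_fun h 0
    have h1 := DFunLike.congr_fun h 1
    simp only [Finsupp.add_apply, Finsupp.single_apply] at h0 h1
    simp only [Fin.reduceEq, if_true, if_false, add_zero, zero_add, mul_eq_mul_left_iff, ha, hb,
      or_false] at h0 h1
    omega
  rw [trinomial_pow_eq_sum]
  simp only [coeff_sum, coeff_monomial]
  rw [Finset.sum_eq_single_of_mem (i + j) (by simp only [Finset.mem_range]; omega)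
      fun k hk hne => Finset.sum_eq_zero fun t ht => if_neg fun h =>
        hne (exponents_eq (by simp only [Finset.mem_range] at ht; omega) h).1,
    Finset.sum_eq_single_of_mem i (by simp only [Finset.mem_range]; omega)
      fun t ht hne => if_neg fun h =>
        hne (exponents_eq (by simp only [Finset.mem_range] at ht; omega) h).2,
    if_pos (by rw [Nat.add_sub_cancel_left, Nat.add_sub_cancel_left])]

end Trinomial

theorem stmt18_general {K : Type*} [Field K] (p : ℕ) (hp : p.Prime) (hp3 : 3 ≤ p) [CharP K p]
    (e : ℕ) (he : 1 ≤ e) (m : ℕ) :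
    MvPolynomial.coeff
        (Finsupp.single (0 : Fin 3) (p ^ e - 3) + Finsupp.single 1 (p ^ e - 1)
          + Finsupp.single 2 m)
        ((X 0 ^ 2 + X 1 ^ 2 + X 2 ^ m : MvPolynomial (Fin 3) K) ^ (p ^ e - 1)) =
      ((Nat.choose (p ^ e - 1) ((p ^ e - 3) / 2) * ((p ^ e + 1) / 2) : ℕ) : K) ∧
    ((Nat.choose (p ^ e - 1) ((p ^ e - 3) / 2) * ((p ^ e + 1) / 2) : ℕ) : K) ≠ 0 := by
  set q := p ^ e
  have hq3 : 3 ≤ q := hp3.trans (Nat.le_self_pow (by omega) p)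
  have hq_odd : q % 2 = 1 := Nat.odd_iff.mp ((hp.odd_of_ne_two (by omega)).pow)
  set a := (q - 3) / 2
  constructor
  · have hcoeff := coeff_trinomial_pow (R := K) two_ne_zero two_ne_zero m a ((q - 1) / 2) 1
    rw [show 2 * a = q - 3 by omega, show 2 * ((q - 1) / 2) = q - 1 by omega, mul_one,
      show a + (q - 1) / 2 + 1 = q - 1 by omega, show a + (q - 1) / 2 = (q - 2) by omega] at hcoeff
    rw [hcoeff, show q - 1 = q - 2 + 1 by omega, Nat.choose_succ_self_right, mul_comm,
      Nat.choose_mul_succ_eq, show q - 2 + 1 - a = (q + 1) / 2 by omega]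
  · rw [Ne, CharP.cast_eq_zero_iff K p, hp.dvd_mul, not_or]
    refine ⟨hp.not_dvd_choose_pow_sub_one e (by omega), fun h => hp.one_lt.ne' ?_⟩
    have hpq : p ∣ q + 1 := h.trans ⟨2, by omega⟩
    exact Nat.dvd_one.mp ((Nat.dvd_add_right (dvd_pow_self p (by omega))).mp hpq)

/-- For a prime `p ≥ 3`, `e ≥ 1`, `m ≥ 2` and `f = X₀² + X₁² + X₂^m` over a field of
characteristic `p`, the coefficient of `X₀^{p^e-3} X₁^{p^e-1} X₂^m` in `f^{p^e-1}` is
`C(p^e-1, (p^e-3)/2)·((p^e+1)/2)` modulo `p`, and this is nonzero modulo `p`. -/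
theorem stmt18 {K : Type*} [Field K] (p : ℕ) (hp : p.Prime) (hp3 : 3 ≤ p) [CharP K p]
    (e : ℕ) (he : 1 ≤ e) (m : ℕ) (hm : 2 ≤ m) :
    MvPolynomial.coeff
        (Finsupp.single (0 : Fin 3) (p ^ e - 3) + Finsupp.single 1 (p ^ e - 1)
          + Finsupp.single 2 m)
        ((X 0 ^ 2 + X 1 ^ 2 + X 2 ^ m : MvPolynomial (Fin 3) K) ^ (p ^ e - 1)) =
      ((Nat.choose (p ^ e - 1) ((p ^ e - 3) / 2) * ((p ^ e + 1) / 2) : ℕ) : K) ∧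
    ((Nat.choose (p ^ e - 1) ((p ^ e - 3) / 2) * ((p ^ e + 1) / 2) : ℕ) : K) ≠ 0 :=
  stmt18_general p hp hp3 e he m
end
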